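/- arXiv:2409.17910 — 6 statements merged into one kernel-verified Lean document; each statement's English description precedes it below -/
import Mathlib

section
/- The mean excess function μ of a distribution with log-concave density is non-increasing: if x ≤ x' then μ(x) ≥ μ(x'). -/
open MeasureTheory Set
open scoped ENNReal

/-- Four-point inequality from log-concavity. -/
lemma fourpoint (f : ℝ → ℝ) (hf_nonneg : ∀ x, 0 ≤ f x)
    (hf_logconcave : ∀ x y t : ℝ, 0 ≤ t → t ≤ 1 →
      f x ^ t * f y ^ (1 - t) ≤ f (t * x + (1 - t) * y))
    {q r s : ℝ} (hqr : q ≤ r) (hs : 0 ≤ s) :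
    f (r + s) * f q ≤ f (q + s) * f r := by
  by_cases hd : r + s - q = 0
  · have hs0 : s = 0 := by linarith
    have hq : q = r := by linarith
    subst hs0; subst hq; simp [mul_comm]
  · set d := r + s - q with hdd
    have hd0 : 0 < d := lt_of_le_of_ne (by simp only [hdd]; linarith) (Ne.symm hd)
    set t := s / d with ht
    have htd : t * d = s := by rw [ht]; field_simp
    have ht0 : 0 ≤ t := div_nonneg hs hd0.le
    have ht1 : t ≤ 1 := by rw [ht, div_le_one hd0]; linarith
    have h1 := hf_logconcave (r + s) q t ht0 ht1
    have h2 := hf_logconcave (r + s) q (1 - t) (by linarith) (by linarith)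
    have e1 : t * (r + s) + (1 - t) * q = q + s := by linear_combination htd
    have e2 : (1 - t) * (r + s) + (1 - (1 - t)) * q = r := by linear_combination -htd
    rw [e1] at h1
    rw [e2] at h2
    have hsimp : (1 : ℝ) - (1 - t) = t := by ring
    rw [hsimp] at h2
    have key : f (r + s) * f q
        = (f (r + s) ^ t * f q ^ (1 - t)) * (f (r + s) ^ (1 - t) * f q ^ t) := by
      have A : ∀ a : ℝ, 0 ≤ a → a = a ^ t * a ^ (1 - t) := by
        intro a ha
        rw [← Real.rpow_add' ha (by norm_num)]
        norm_num
      calc f (r + s) * f q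
          = (f (r + s) ^ t * f (r + s) ^ (1 - t)) * (f q ^ t * f q ^ (1 - t)) := by
            rw [← A _ (hf_nonneg _), ← A _ (hf_nonneg _)]
        _ = (f (r + s) ^ t * f q ^ (1 - t)) * (f (r + s) ^ (1 - t) * f q ^ t) := by ring
    rw [key]
    exact mul_le_mul h1 h2 (mul_nonneg (Real.rpow_nonneg (hf_nonneg _) _) (Real.rpow_nonneg (hf_nonneg _) _)) (hf_nonneg _)

/-- Shift a set lintegral. -/
lemma shift_lint (g : ℝ → ℝ≥0∞) {S T : Set ℝ} (hS : MeasurableSet S)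
    (hT : MeasurableSet T) (s : ℝ) (h : ∀ r : ℝ, r ∈ S ↔ r + s ∈ T) :
    ∫⁻ y in T, g y = ∫⁻ r in S, g (r + s) := by
  rw [← lintegral_indicator hT g, ← lintegral_indicator hS (fun r => g (r + s)),
    ← lintegral_add_right_eq_self (fun y => T.indicator g y) s]
  congr 1; ext r
  by_cases hr : r ∈ S
  · simp [Set.indicator_apply, hr, (h r).mp hr]
  · have : r + s ∉ T := fun hh => hr ((h r).mpr hh)
    simp [Set.indicator_apply, hr, this]

/-- Log-concavity of the survival function (multiplicative form). -/
lemma survival_logconcave (f : ℝ → ℝ) (hf_meas : Measurable f) (hf_nonneg : ∀ x, 0 ≤ f x)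
    (hf_logconcave : ∀ x y t : ℝ, 0 ≤ t → t ≤ 1 →
      f x ^ t * f y ^ (1 - t) ≤ f (t * x + (1 - t) * y))
    {x x' s : ℝ} (hxx' : x ≤ x') (hs : 0 ≤ s) :
    (∫⁻ y in Ioi (x' + s), ENNReal.ofReal (f y)) * (∫⁻ y in Ioi x, ENNReal.ofReal (f y))
      ≤ (∫⁻ y in Ioi (x + s), ENNReal.ofReal (f y)) *
        (∫⁻ y in Ioi x', ENNReal.ofReal (f y)) := by
  set g : ℝ → ℝ≥0∞ := fun y => ENNReal.ofReal (f y) with hg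
  have hgm : Measurable g := hf_meas.ennreal_ofReal
  have hdisj : ∀ a b : ℝ, Disjoint (Ioc a b) (Ioi b) := by
    intro a b
    rw [Set.disjoint_left]
    rintro y ⟨_, h2⟩ h3
    exact absurd h3 (not_lt.2 h2)
  have hsplit : ∀ a b : ℝ, a ≤ b →
      (∫⁻ y in Ioi a, g y) = (∫⁻ y in Ioc a b, g y) + ∫⁻ y in Ioi b, g y := by
    intro a b hab
    rw [← lintegral_union measurableSet_Ioi (hdisj a b), Ioc_union_Ioi_eq_Ioi hab]
  have core : (∫⁻ y in Ioi (x' + s), g y) * (∫⁻ y in Ioc x x', g y)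
      ≤ (∫⁻ y in Ioc (x + s) (x' + s), g y) * ∫⁻ y in Ioi x', g y := by
    rw [shift_lint g (S := Ioi x') (T := Ioi (x' + s)) measurableSet_Ioi measurableSet_Ioi s
        (fun r => by simp only [mem_Ioi]; constructor <;> intro <;> linarith),
      shift_lint g (S := Ioc x x') (T := Ioc (x + s) (x' + s)) measurableSet_Ioc
        measurableSet_Ioc s
        (fun r => by simp only [mem_Ioc]; constructor <;> rintro ⟨h1, h2⟩ <;>
          exact ⟨by linarith, by linarith⟩)]
    rw [mul_comm (∫⁻ q in Ioc x x', g (q + s)) (∫⁻ y in Ioi x', g y)]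
    have hms : Measurable fun r : ℝ => g (r + s) := hgm.comp (measurable_add_const s)
    rw [← lintegral_prod_mul hms.aemeasurable hgm.aemeasurable,
      ← lintegral_prod_mul hgm.aemeasurable hms.aemeasurable]
    refine lintegral_mono_ae ?_
    have hae : ∀ᵐ z : ℝ × ℝ ∂((volume.restrict (Ioi x')).prod (volume.restrict (Ioc x x'))),
        z ∈ Ioi x' ×ˢ Ioc x x' := by
      rw [Measure.prod_restrict]
      exact ae_restrict_mem (measurableSet_Ioi.prod measurableSet_Ioc)
    filter_upwards [hae] with z hz
    obtain ⟨hz1, hz2⟩ := hz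
    have h4 := fourpoint f hf_nonneg hf_logconcave (q := z.2) (r := z.1)
      (le_trans hz2.2 (le_of_lt hz1)) hs
    calc g (z.1 + s) * g z.2 = ENNReal.ofReal (f (z.1 + s) * f z.2) :=
          (ENNReal.ofReal_mul (hf_nonneg _)).symm
      _ ≤ ENNReal.ofReal (f (z.2 + s) * f z.1) := ENNReal.ofReal_le_ofReal h4
      _ = g (z.2 + s) * g z.1 := ENNReal.ofReal_mul (hf_nonneg _)
      _ = g z.1 * g (z.2 + s) := mul_comm _ _
  calc (∫⁻ y in Ioi (x' + s), g y) * ∫⁻ y in Ioi x, g y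
      = (∫⁻ y in Ioi (x' + s), g y) * ((∫⁻ y in Ioc x x', g y) + ∫⁻ y in Ioi x', g y) := by
        rw [← hsplit x x' hxx']
    _ = (∫⁻ y in Ioi (x' + s), g y) * (∫⁻ y in Ioc x x', g y)
        + (∫⁻ y in Ioi (x' + s), g y) * ∫⁻ y in Ioi x', g y := mul_add _ _ _
    _ ≤ (∫⁻ y in Ioc (x + s) (x' + s), g y) * (∫⁻ y in Ioi x', g y)
        + (∫⁻ y in Ioi (x' + s), g y) * ∫⁻ y in Ioi x', g y := add_le_add_left core _
    _ = ((∫⁻ y in Ioc (x + s) (x' + s), g y) + ∫⁻ y in Ioi (x' + s), g y)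
        * ∫⁻ y in Ioi x', g y := (add_mul _ _ _).symm
    _ = (∫⁻ y in Ioi (x + s), g y) * ∫⁻ y in Ioi x', g y := by
        rw [← hsplit (x + s) (x' + s) (by linarith)]

/-- Layer-cake representation of the mean excess integral. -/
lemma layercake (f : ℝ → ℝ) (hf_meas : Measurable f) (hf_nonneg : ∀ x, 0 ≤ f x) (z : ℝ) :
    ∫⁻ y, ENNReal.ofReal (max (y - z) 0 * f y) =
      ∫⁻ s in Ioi (0 : ℝ), ∫⁻ y in Ioi (z + s), ENNReal.ofReal (f y) := by
  set g : ℝ → ℝ≥0∞ := fun y => ENNReal.ofReal (f y) with hg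
  have hgm : Measurable g := hf_meas.ennreal_ofReal
  set Φ : ℝ → ℝ → ℝ≥0∞ := fun s y =>
    {p : ℝ × ℝ | 0 < p.1 ∧ z + p.1 < p.2}.indicator (fun p => g p.2) (s, y) with hΦ
  have hA : MeasurableSet {p : ℝ × ℝ | 0 < p.1 ∧ z + p.1 < p.2} :=
    (measurableSet_lt measurable_const measurable_fst).inter
      (measurableSet_lt (measurable_fst.const_add z) measurable_snd)
  have hΦm : Measurable (Function.uncurry Φ) :=
    (hgm.comp measurable_snd).indicator hA
  have stepA : ∀ y : ℝ, (∫⁻ s, Φ s y) = ENNReal.ofReal (max (y - z) 0) * g y := by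
    intro y
    have h1 : (fun s => Φ s y) = (Ioo 0 (y - z)).indicator (fun _ => g y) := by
      ext s
      simp only [hΦ, Set.indicator_apply, mem_setOf_eq, mem_Ioo]
      exact if_congr ⟨fun ⟨h1, h2⟩ => ⟨h1, by linarith⟩, fun ⟨h1, h2⟩ => ⟨h1, by linarith⟩⟩
        rfl rfl
    rw [h1, lintegral_indicator measurableSet_Ioo, setLIntegral_const, Real.volume_Ioo,
      sub_zero, mul_comm]
    rcases le_total (y - z) 0 with h | h
    · rw [max_eq_right h, ENNReal.ofReal_of_nonpos h, ENNReal.ofReal_zero]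
    · rw [max_eq_left h]
  have stepB : ∀ s : ℝ, (∫⁻ y, Φ s y)
      = (Ioi (0 : ℝ)).indicator (fun s => ∫⁻ y in Ioi (z + s), g y) s := by
    intro s
    by_cases hs : 0 < s
    · have h1 : (fun y => Φ s y) = (Ioi (z + s)).indicator g := by
        ext y
        simp only [hΦ, Set.indicator_apply, mem_setOf_eq, mem_Ioi]
        exact if_congr ⟨fun ⟨_, h2⟩ => h2, fun h2 => ⟨hs, h2⟩⟩ rfl rfl
      rw [h1, lintegral_indicator measurableSet_Ioi, indicator_of_mem (mem_Ioi.mpr hs)]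
    · have h1 : (fun y => Φ s y) = fun _ => 0 := by
        ext y
        simp only [hΦ, Set.indicator_apply, mem_setOf_eq]
        rw [if_neg (fun h => hs h.1)]
      rw [h1, lintegral_zero, indicator_of_notMem (fun h => hs (mem_Ioi.mp h))]
  calc ∫⁻ y, ENNReal.ofReal (max (y - z) 0 * f y)
      = ∫⁻ y, ENNReal.ofReal (max (y - z) 0) * g y := by
        congr 1; ext y; exact ENNReal.ofReal_mul (le_max_right _ _)
    _ = ∫⁻ y, ∫⁻ s, Φ s y := by simp_rw [stepA]
    _ = ∫⁻ s, ∫⁻ y, Φ s y := (lintegral_lintegral_swap hΦm.aemeasurable).symm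
    _ = ∫⁻ s, (Ioi (0 : ℝ)).indicator (fun s => ∫⁻ y in Ioi (z + s), g y) s := by
        simp_rw [stepB]
    _ = ∫⁻ s in Ioi (0 : ℝ), ∫⁻ y in Ioi (z + s), g y :=
        lintegral_indicator measurableSet_Ioi _

/-- The mean excess function of a distribution with log-concave density is
non-increasing. -/
theorem stmt_2
    (f : ℝ → ℝ) (hf_meas : Measurable f) (hf_nonneg : ∀ x, 0 ≤ f x)
    (hf_logconcave : ∀ x y t : ℝ, 0 ≤ t → t ≤ 1 →
      f x ^ t * f y ^ (1 - t) ≤ f (t * x + (1 - t) * y))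
    (hf_int : ∫ x, f x = 1)
    (F : ℝ → ℝ) (hF : ∀ x, F x = ∫ y in Iic x, f y)
    (μ : ℝ → ℝ)
    (hμ : ∀ x, μ x = if F x < 1 then (1 - F x)⁻¹ * ∫ y, max (y - x) 0 * f y else 0) :
    ∀ x x' : ℝ, x ≤ x' → μ x' ≤ μ x := by
  intro x x' hxx'
  have hInt : Integrable f := by
    by_contra h
    rw [integral_undef h] at hf_int
    norm_num at hf_int
  set g : ℝ → ℝ≥0∞ := fun y => ENNReal.ofReal (f y) with hg
  have hFx : ∀ z : ℝ, 1 - F z = ∫ y in Ioi z, f y := by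
    intro z
    have h1 := integral_add_compl (measurableSet_Iic (a := z)) hInt
    rw [compl_Iic, hf_int] at h1
    rw [hF z]
    linarith [h1]
  have hG : ∀ z : ℝ, (∫⁻ y in Ioi z, g y) = ENNReal.ofReal (1 - F z) := by
    intro z
    rw [hFx z]
    exact (ofReal_integral_eq_lintegral_ofReal hInt.integrableOn
      (ae_of_all _ hf_nonneg)).symm
  have hFle : ∀ z : ℝ, 0 ≤ 1 - F z := by
    intro z
    rw [hFx]
    exact setIntegral_nonneg measurableSet_Ioi (fun y _ => hf_nonneg y)
  have hmono : 1 - F x' ≤ 1 - F x := by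
    rw [hFx, hFx]
    exact setIntegral_mono_set hInt.integrableOn (ae_of_all _ hf_nonneg)
      (HasSubset.Subset.eventuallyLE (Ioi_subset_Ioi hxx'))
  have hE_nonneg : ∀ z : ℝ, 0 ≤ ∫ y, max (y - z) 0 * f y := fun z =>
    integral_nonneg (fun y => mul_nonneg (le_max_right _ _) (hf_nonneg y))
  have hmz : ∀ z : ℝ, AEStronglyMeasurable (fun y => max (y - z) 0 * f y) volume :=
    fun z => (((measurable_id.sub_const z).max measurable_const).mul
      hf_meas).aestronglyMeasurable
  by_cases hFx' : F x' < 1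
  · have hFxlt : F x < 1 := by linarith
    rw [hμ x, hμ x', if_pos hFx', if_pos hFxlt]
    by_cases hIx : Integrable (fun y => max (y - x) 0 * f y)
    · have hIx' : Integrable (fun y => max (y - x') 0 * f y) := by
        refine hIx.mono' (hmz x') (ae_of_all _ (fun y => ?_))
        rw [Real.norm_eq_abs, abs_of_nonneg (mul_nonneg (le_max_right _ _) (hf_nonneg y))]
        exact mul_le_mul_of_nonneg_right (max_le_max (by linarith) le_rfl) (hf_nonneg y)
      have hEi : ∀ z : ℝ, Integrable (fun y => max (y - z) 0 * f y) →
          ENNReal.ofReal (∫ y, max (y - z) 0 * f y)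
            = ∫⁻ s in Ioi (0 : ℝ), ∫⁻ y in Ioi (z + s), g y := by
        intro z hIz
        rw [ofReal_integral_eq_lintegral_ofReal hIz
          (ae_of_all _ (fun y => mul_nonneg (le_max_right _ _) (hf_nonneg y)))]
        exact layercake f hf_meas hf_nonneg z
      have key : ENNReal.ofReal (∫ y, max (y - x') 0 * f y) * ENNReal.ofReal (1 - F x)
          ≤ ENNReal.ofReal (∫ y, max (y - x) 0 * f y) * ENNReal.ofReal (1 - F x') := by
        rw [hEi x' hIx', hEi x hIx, ← hG x, ← hG x']
        rw [← lintegral_mul_const' _ _ (by rw [hG x]; exact ENNReal.ofReal_ne_top),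
          ← lintegral_mul_const' _ _ (by rw [hG x']; exact ENNReal.ofReal_ne_top)]
        refine lintegral_mono_ae ?_
        filter_upwards [ae_restrict_mem measurableSet_Ioi] with s hs
        exact survival_logconcave f hf_meas hf_nonneg hf_logconcave hxx' (le_of_lt hs)
      rw [← ENNReal.ofReal_mul (hE_nonneg x'), ← ENNReal.ofReal_mul (hE_nonneg x)] at key
      have keyR : (∫ y, max (y - x') 0 * f y) * (1 - F x)
          ≤ (∫ y, max (y - x) 0 * f y) * (1 - F x') :=
        (ENNReal.ofReal_le_ofReal_iff (mul_nonneg (hE_nonneg x) (hFle x'))).mp key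
      have ha : 0 < 1 - F x := by linarith
      have hb : 0 < 1 - F x' := by linarith
      rw [inv_mul_eq_div, inv_mul_eq_div, div_le_div_iff₀ hb ha]
      exact keyR
    · have hIx'0 : ¬ Integrable (fun y => max (y - x') 0 * f y) := by
        intro h
        apply hIx
        have hfInt : Integrable (fun y => max (y - x') 0 * f y + (x' - x) * f y) :=
          h.add (hInt.const_mul _)
        refine hfInt.mono' (hmz x) (ae_of_all _ fun y => ?_)
        rw [Real.norm_eq_abs, abs_of_nonneg (mul_nonneg (le_max_right _ _) (hf_nonneg y))]
        have hmax : max (y - x) 0 ≤ max (y - x') 0 + (x' - x) := by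
          rcases le_total (y - x) 0 with h1 | h1
          · rw [max_eq_right h1]
            linarith [le_max_right (y - x') 0]
          · rw [max_eq_left h1]
            linarith [le_max_left (y - x') 0]
        calc max (y - x) 0 * f y ≤ (max (y - x') 0 + (x' - x)) * f y :=
              mul_le_mul_of_nonneg_right hmax (hf_nonneg y)
          _ = max (y - x') 0 * f y + (x' - x) * f y := add_mul _ _ _
      rw [integral_undef hIx, integral_undef hIx'0]
      simp
  · rw [hμ x', if_neg hFx', hμ x]
    by_cases hFxlt : F x < 1
    · rw [if_pos hFxlt]
      exact mul_nonneg (inv_nonneg.mpr (hFle x)) (hE_nonneg x)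
    · rw [if_neg hFxlt]
end

section
/- Let f = exp(φ) be a log-concave probability density with support right endpoint b₀ < ∞. Then for any x ∈ [a₀, b₀) (with a₀ the left endpoint of the support), the mean excess function satisfies (b₀ − x)·ν(φ'(b₀−)(b₀ − x)) ≤ μ(x) ≤ (b₀ − x)·ν(φ'(x+)(b₀ − x)), where ν(t) = (∫₀¹ u e^{tu} du)/(∫₀¹ e^{tu} du), ν(−∞) := 0, ν(∞) := 1, and φ'(·+), φ'(·−) denote one-sided derivatives. -/
open MeasureTheory Set

/-- `exp` of an extended-real number (with `exp(-∞) = 0`); we only use it on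
values `≠ ⊤`. -/
noncomputable def expE (e : EReal) : ℝ := if e = ⊥ then 0 else Real.exp e.toReal

/-- `ν(t) = (∫₀¹ u e^{tu} du)/(∫₀¹ e^{tu} du)`. -/
noncomputable def nuR (t : ℝ) : ℝ :=
  (∫ u in Set.Icc (0:ℝ) 1, u * Real.exp (t * u)) /
    (∫ u in Set.Icc (0:ℝ) 1, Real.exp (t * u))

/-- Extension of `ν` to `[-∞,∞]` with `ν(-∞) = 0`, `ν(∞) = 1`. -/
noncomputable def nuE (e : EReal) : ℝ :=
  if e = ⊥ then 0 else if e = ⊤ then 1 else nuR e.toReal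

/-- Right-sided derivative `φ'(x+)` of a concave `φ` on `(x, b₀)`, as the
supremum of the slopes. -/
noncomputable def rightSlope (φ : ℝ → EReal) (b0 x : ℝ) : EReal :=
  sSup {s : EReal | ∃ y : ℝ, x < y ∧ y < b0 ∧ s = (φ y - φ x) * (((y - x)⁻¹ : ℝ) : EReal)}

/-- Left-sided derivative `φ'(b₀-)` of a concave `φ` at the right endpoint `b₀`
of its effective domain, as the infimum of the slopes. -/
noncomputable def leftSlopeEnd (φ : ℝ → EReal) (a0 b0 : ℝ) : EReal :=
  sInf {s : EReal | ∃ y z : ℝ, a0 < y ∧ y < z ∧ z < b0 ∧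
    s = (φ z - φ y) * (((z - y)⁻¹ : ℝ) : EReal)}

lemma cheb {ι : Set ℝ} (hι : MeasurableSet ι) (g h w : ℝ → ℝ)
    (hg : IntegrableOn g ι) (hh : IntegrableOn h ι)
    (hwg : IntegrableOn (fun y => w y * g y) ι) (hwh : IntegrableOn (fun y => w y * h y) ι)
    (hw : MonotoneOn w ι)
    (hyp : ∀ y ∈ ι, ∀ z ∈ ι, y ≤ z → g z * h y ≤ g y * h z) :
    (∫ y in ι, w y * g y) * (∫ y in ι, h y) ≤ (∫ y in ι, g y) * (∫ y in ι, w y * h y) := by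
  set ν := volume.restrict ι with hν
  have key : 0 ≤ ∫ p : ℝ × ℝ, (w p.2 - w p.1) * (g p.1 * h p.2 - g p.2 * h p.1) ∂(ν.prod ν) := by
    rw [hν, Measure.prod_restrict]
    apply setIntegral_nonneg (hι.prod hι)
    rintro ⟨y, z⟩ ⟨h1, h2⟩
    rcases le_total y z with hle | hle
    · exact mul_nonneg (sub_nonneg.2 (hw h1 h2 hle)) (sub_nonneg.2 (hyp y h1 z h2 hle))
    · have h3 := hw h2 h1 hle
      have h4 := hyp z h2 y h1 hle
      nlinarith
  have i1 : Integrable (fun p : ℝ × ℝ => g p.1 * (w p.2 * h p.2)) (ν.prod ν) := Integrable.mul_prod hg hwh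
  have i2 : Integrable (fun p : ℝ × ℝ => (w p.1 * g p.1) * h p.2) (ν.prod ν) := Integrable.mul_prod hwg hh
  have i3 : Integrable (fun p : ℝ × ℝ => h p.1 * (w p.2 * g p.2)) (ν.prod ν) := Integrable.mul_prod hh hwg
  have i4 : Integrable (fun p : ℝ × ℝ => (w p.1 * h p.1) * g p.2) (ν.prod ν) := Integrable.mul_prod hwh hg
  have eq1 : (fun p : ℝ × ℝ => (w p.2 - w p.1) * (g p.1 * h p.2 - g p.2 * h p.1))
      = fun p : ℝ × ℝ => (g p.1 * (w p.2 * h p.2) - h p.1 * (w p.2 * g p.2)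
          - (w p.1 * g p.1) * h p.2) + (w p.1 * h p.1) * g p.2 := by
    funext p; ring
  have e4 := integral_add ((i1.sub i3).sub i2) i4
  have e3 := integral_sub (i1.sub i3) i2
  have e2 := integral_sub i1 i3
  simp only [Pi.sub_apply] at e4 e3
  have p1 : ∫ (a : ℝ × ℝ), g a.1 * (w a.2 * h a.2) ∂ν.prod ν
      = (∫ y, g y ∂ν) * ∫ y, w y * h y ∂ν := integral_prod_mul g (fun y => w y * h y)
  have p2 : ∫ (a : ℝ × ℝ), h a.1 * (w a.2 * g a.2) ∂ν.prod ν
      = (∫ y, h y ∂ν) * ∫ y, w y * g y ∂ν := integral_prod_mul h (fun y => w y * g y)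
  have p3 : ∫ (a : ℝ × ℝ), w a.1 * g a.1 * h a.2 ∂ν.prod ν
      = (∫ y, w y * g y ∂ν) * ∫ y, h y ∂ν := integral_prod_mul (fun y => w y * g y) h
  have p4 : ∫ (a : ℝ × ℝ), w a.1 * h a.1 * g a.2 ∂ν.prod ν
      = (∫ y, w y * h y ∂ν) * ∫ y, g y ∂ν := integral_prod_mul (fun y => w y * h y) g
  rw [eq1, e4, e3, e2, p1, p2, p3, p4] at key
  linarith

lemma concave_key (φ : ℝ → EReal) (hφ_top : ∀ x, φ x ≠ ⊤)
    (hφ_concave : ∀ x y t : ℝ, 0 ≤ t → t ≤ 1 →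
      (t : EReal) * φ x + ((1 - t : ℝ) : EReal) * φ y ≤ φ (t * x + (1 - t) * y))
    {u v w : ℝ} (huv : u < v) (hvw : v < w) (hu : φ u ≠ ⊥) (hw : φ w ≠ ⊥) :
    φ v ≠ ⊥ ∧ ((w - v) / (w - u)) * (φ u).toReal + ((v - u) / (w - u)) * (φ w).toReal
      ≤ (φ v).toReal := by
  set t := (w - v) / (w - u) with hts
  have hwu : 0 < w - u := by linarith
  have ht0 : 0 ≤ t := div_nonneg (by linarith) hwu.le
  have ht1 : t ≤ 1 := by rw [hts, div_le_one hwu]; linarith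
  have h1t : 1 - t = (v - u) / (w - u) := by rw [hts]; field_simp; ring
  have hv : t * u + (1 - t) * w = v := by rw [h1t, hts]; field_simp; ring
  have h := hφ_concave u w t ht0 ht1
  rw [hv, ← EReal.coe_toReal (hφ_top u) hu, ← EReal.coe_toReal (hφ_top w) hw,
    ← EReal.coe_mul, ← EReal.coe_mul, ← EReal.coe_add] at h
  have hbot : φ v ≠ ⊥ := ((EReal.bot_lt_coe _).trans_le h).ne'
  refine ⟨hbot, ?_⟩
  rw [← EReal.coe_toReal (hφ_top v) hbot, EReal.coe_le_coe_iff] at h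
  rw [← h1t]
  exact h

lemma nu_calc0 (x b0 : ℝ) (hxb : x < b0) (s : ℝ) :
    (∫ y in Ioo x b0, Real.exp (s * (y - x)))
      = (b0 - x) * ∫ u in Icc (0:ℝ) 1, Real.exp ((s * (b0 - x)) * u) := by
  set c := b0 - x with hcd
  have hc : 0 < c := by rw [hcd]; linarith
  have h1 : (∫ u in (0:ℝ)..1, Real.exp ((s * c) * u))
      = ∫ u in (0:ℝ)..1, (fun y => Real.exp (s * (y - x))) (c * u + x) := by
    apply intervalIntegral.integral_congr
    intro u _
    simp only
    ring_nf
  have h2 := intervalIntegral.integral_comp_mul_add (a := (0:ℝ)) (b := 1)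
      (fun y => Real.exp (s * (y - x))) hc.ne' x
  rw [show c * 0 + x = x by ring, show c * 1 + x = b0 by rw [hcd]; ring] at h2
  rw [integral_Icc_eq_integral_Ioc, ← intervalIntegral.integral_of_le zero_le_one, h1, h2,
    intervalIntegral.integral_of_le hxb.le, integral_Ioc_eq_integral_Ioo, smul_eq_mul,
    ← mul_assoc, mul_inv_cancel₀ hc.ne', one_mul]

lemma nu_calc1 (x b0 : ℝ) (hxb : x < b0) (s : ℝ) :
    (∫ y in Ioo x b0, (y - x) * Real.exp (s * (y - x)))
      = ((b0 - x)^2) * ∫ u in Icc (0:ℝ) 1, u * Real.exp ((s * (b0 - x)) * u) := by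
  set c := b0 - x with hcd
  have hc : 0 < c := by rw [hcd]; linarith
  have h1 : (∫ u in (0:ℝ)..1, c * (u * Real.exp ((s * c) * u)))
      = ∫ u in (0:ℝ)..1, (fun y => (y - x) * Real.exp (s * (y - x))) (c * u + x) := by
    apply intervalIntegral.integral_congr
    intro u _
    simp only
    ring_nf
  have h2 := intervalIntegral.integral_comp_mul_add (a := (0:ℝ)) (b := 1)
      (fun y => (y - x) * Real.exp (s * (y - x))) hc.ne' x
  rw [show c * 0 + x = x by ring, show c * 1 + x = b0 by rw [hcd]; ring] at h2
  rw [intervalIntegral.integral_const_mul] at h1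
  rw [integral_Icc_eq_integral_Ioc, ← intervalIntegral.integral_of_le zero_le_one]
  have h3 : c * (c * ∫ u in (0:ℝ)..1, u * Real.exp ((s * c) * u))
      = c * (c⁻¹ • ∫ y in x..b0, (y - x) * Real.exp (s * (y - x))) := by
    rw [← h2, ← h1]
  rw [smul_eq_mul, show ∀ I : ℝ, c * (c⁻¹ * I) = I from fun I => by field_simp,
    intervalIntegral.integral_of_le hxb.le, integral_Ioc_eq_integral_Ioo] at h3
  rw [← h3]; ring

lemma nuE_coe (t : ℝ) : nuE (t : EReal) = nuR t := by
  unfold nuE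
  rw [if_neg (EReal.coe_ne_bot t), if_neg (EReal.coe_ne_top t), EReal.toReal_coe]

lemma denom_pos (t : ℝ) : 0 < ∫ u in Icc (0:ℝ) 1, Real.exp (t * u) := by
  rw [integral_Icc_eq_integral_Ioc, ← intervalIntegral.integral_of_le zero_le_one]
  apply intervalIntegral.intervalIntegral_pos_of_pos_on
  · exact (Real.continuous_exp.comp (continuous_const.mul continuous_id)).intervalIntegrable 0 1
  · exact fun u _ => Real.exp_pos _
  · exact zero_lt_one

set_option maxHeartbeats 1000000 in
/-- For a log-concave density `f = e^φ` with bounded support right endpoint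
`b₀ < ∞`, the mean excess function satisfies
`(b₀-x) ν(φ'(b₀-)(b₀-x)) ≤ μ(x) ≤ (b₀-x) ν(φ'(x+)(b₀-x))`. -/
theorem stmt_6
    (φ : ℝ → EReal) (hφ_top : ∀ x, φ x ≠ ⊤)
    (hφ_concave : ∀ x y t : ℝ, 0 ≤ t → t ≤ 1 →
      (t : EReal) * φ x + ((1 - t : ℝ) : EReal) * φ y ≤ φ (t * x + (1 - t) * y))
    (hφ_usc : UpperSemicontinuous φ)
    (f : ℝ → ℝ) (hf : ∀ x, f x = expE (φ x)) (hf_int : ∫ x, f x = 1)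
    (a0 b0 : ℝ) (hab : a0 < b0)
    (F : ℝ → ℝ) (hF : ∀ x, F x = ∫ y in Iic x, f y)
    (hsupp : ∀ x, (0 < F x ∧ F x < 1) ↔ x ∈ Ioo a0 b0)
    (μ : ℝ → ℝ)
    (hμ : ∀ x, μ x = if F x < 1 then (1 - F x)⁻¹ * ∫ y, max (y - x) 0 * f y else 0)
    (x : ℝ) (hx : x ∈ Ico a0 b0) :
    (b0 - x) * nuE (leftSlopeEnd φ a0 b0 * ((b0 - x : ℝ) : EReal)) ≤ μ x ∧
      μ x ≤ (b0 - x) * nuE (rightSlope φ b0 x * ((b0 - x : ℝ) : EReal)) := by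
  obtain ⟨hax, hxb⟩ := hx
  -- basic facts about f
  have hf0 : ∀ y, 0 ≤ f y := by
    intro y; rw [hf]; unfold expE; split
    · exact le_refl 0
    · exact (Real.exp_pos _).le
  have hInt : Integrable f := by
    by_contra hc'
    rw [integral_undef hc'] at hf_int
    norm_num at hf_int
  have ffact : ∀ y, φ y ≠ ⊥ → f y = Real.exp ((φ y).toReal) := by
    intro y hy; rw [hf]; simp [expE, hy]
  have fbot : ∀ y, φ y = ⊥ → f y = 0 := by
    intro y hy; rw [hf]; simp [expE, hy]
  -- facts about F
  have hFdiff : ∀ y z : ℝ, y ≤ z → F z - F y = ∫ t in Ioc y z, f t := by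
    intro y z hyz
    have hun : Iic z = Iic y ∪ Ioc y z := (Iic_union_Ioc_eq_Iic hyz).symm
    rw [hF z, hun, setIntegral_union (Iic_disjoint_Ioc le_rfl) measurableSet_Ioc
      hInt.integrableOn hInt.integrableOn, hF y]
    ring
  have hFmono : ∀ y z : ℝ, y ≤ z → F y ≤ F z := by
    intro y z hyz
    have h1 := hFdiff y z hyz
    have h2 : 0 ≤ ∫ t in Ioc y z, f t := setIntegral_nonneg measurableSet_Ioc fun t _ => hf0 t
    linarith
  have hFsplit : ∀ z : ℝ, F z + ∫ t in Ioi z, f t = 1 := by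
    intro z
    have h2 := integral_add_compl (measurableSet_Iic : MeasurableSet (Iic z)) hInt
    rw [compl_Iic, hf_int] at h2
    rw [hF]
    exact h2
  have hFle1 : ∀ z, F z ≤ 1 := by
    intro z
    have h1 := hFsplit z
    have h2 : 0 ≤ ∫ t in Ioi z, f t := setIntegral_nonneg measurableSet_Ioi fun t _ => hf0 t
    linarith
  have hmid : ∀ y, y ∈ Ioo a0 b0 → 0 < F y ∧ F y < 1 := fun y hy => (hsupp y).mpr hy
  have hFx1 : F x < 1 :=
    lt_of_le_of_lt (hFmono x ((x + b0) / 2) (by linarith))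
      (hmid ((x + b0) / 2) ⟨by linarith, by linarith⟩).2
  -- φ is finite on (a0, b0)
  have hfne : ∀ y, y ∈ Ioo a0 b0 → φ y ≠ ⊥ := by
    intro y hy hyb
    by_cases hcase : ∃ u, u < y ∧ φ u ≠ ⊥
    · obtain ⟨u, huy, hu⟩ := hcase
      have hv : ∀ v, y < v → φ v = ⊥ := by
        intro v hv'
        by_contra hvb
        exact (concave_key φ hφ_top hφ_concave huy hv' hu hvb).1 hyb
      have hz : (y + b0) / 2 ∈ Ioo a0 b0 := ⟨by linarith [hy.1, hy.2], by linarith [hy.2]⟩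
      have h0 : ∫ t in Ioi ((y + b0) / 2), f t = 0 := by
        apply setIntegral_eq_zero_of_forall_eq_zero
        intro t ht
        exact fbot t (hv t (by simp only [mem_Ioi] at ht; linarith [hy.2]))
      have h1 := hFsplit ((y + b0) / 2)
      have h2 := (hmid _ hz).2
      linarith
    · push_neg at hcase
      have hz : (a0 + y) / 2 ∈ Ioo a0 b0 := ⟨by linarith [hy.1], by linarith [hy.1, hy.2]⟩
      have h0 : F ((a0 + y) / 2) = 0 := by
        rw [hF]
        apply setIntegral_eq_zero_of_forall_eq_zero
        intro t ht
        exact fbot t (hcase t (by simp only [mem_Iic] at ht; linarith [hy.1]))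
      have h1 := (hmid _ hz).1
      linarith
  -- f vanishes beyond b0
  have hmid0 : (a0 + b0) / 2 ∈ Ioo a0 b0 := ⟨by linarith, by linarith⟩
  have hftop : ∀ w, b0 < w → f w = 0 := by
    intro w hw
    suffices hwb : φ w = ⊥ by exact fbot w hwb
    by_contra hwb
    have hF1 : ∀ z, b0 < z → F z = 1 := by
      intro z hz
      have h0 : 0 < F z := lt_of_lt_of_le (hmid _ hmid0).1 (hFmono _ _ (by linarith))
      rcases lt_or_eq_of_le (hFle1 z) with h1 | h1
      · exact absurd ((hsupp z).mp ⟨h0, h1⟩).2 (by linarith)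
      · exact h1
    set z1 := b0 + (w - b0) / 3 with hz1
    set z2 := b0 + 2 * (w - b0) / 3 with hz2
    have hb1 : b0 < z1 := by rw [hz1]; linarith
    have hlt : z1 < z2 := by rw [hz1, hz2]; linarith
    have h2w : z2 < w := by rw [hz2]; linarith
    have hφt : ∀ t, t ∈ Ioc z1 z2 → φ t ≠ ⊥ := by
      intro t ht
      exact (concave_key φ hφ_top hφ_concave (show (a0 + b0) / 2 < t by linarith [ht.1])
        (show t < w by linarith [ht.2]) (hfne _ hmid0) hwb).1
    have hI : ∫ t in Ioc z1 z2, f t = 0 := by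
      rw [← hFdiff z1 z2 hlt.le, hF1 z1 hb1, hF1 z2 (by linarith)]
      ring
    have hpos : 0 < ∫ t in Ioc z1 z2, f t := by
      rw [setIntegral_pos_iff_support_of_nonneg_ae
        (Filter.Eventually.of_forall fun t => hf0 t) hInt.integrableOn]
      have hsub : Ioc z1 z2 ⊆ Function.support f := by
        intro t ht
        rw [Function.mem_support, ffact t (hφt t ht)]
        exact (Real.exp_pos _).ne'
      rw [inter_eq_self_of_subset_right hsub, Real.volume_Ioc]
      exact ENNReal.ofReal_pos.mpr (by linarith)
    exact absurd hI hpos.ne'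
  have hFb0 : F b0 = 1 := by
    have h0 : ∫ t in Ioi b0, f t = 0 :=
      setIntegral_eq_zero_of_forall_eq_zero fun t ht => hftop t ht
    have h1 := hFsplit b0
    linarith
  -- the main quantities
  set c := b0 - x with hcd
  have hc : 0 < c := by rw [hcd]; linarith
  set ι := Ioo x b0 with hιd
  have hιsub : ι ⊆ Ioo a0 b0 := fun y hy => ⟨by linarith [hy.1], hy.2⟩
  set Pf := ∫ y in ι, f y with hPfd
  set Qf := ∫ y in ι, (y - x) * f y with hQfd
  have hPfeq : Pf = 1 - F x := by
    have h1 := hFdiff x b0 hxb.le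
    rw [integral_Ioc_eq_integral_Ioo, hFb0] at h1
    rw [hPfd, hιd, ← h1]
  have hPf : 0 < Pf := by rw [hPfeq]; linarith
  have hμx : μ x = Pf⁻¹ * Qf := by
    have hind : (fun y => max (y - x) 0 * f y) = (Ioc x b0).indicator (fun y => (y - x) * f y) := by
      funext y
      by_cases hy : y ∈ Ioc x b0
      · rw [indicator_of_mem hy, max_eq_left (by linarith [hy.1] : (0:ℝ) ≤ y - x)]
      · rw [indicator_of_notMem hy]
        rcases le_or_gt y x with h | h
        · rw [max_eq_right (by linarith), zero_mul]
        · have hyb : b0 < y := by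
            by_contra hyb
            exact hy ⟨h, by linarith⟩
          rw [hftop y hyb, mul_zero]
    rw [hμ x, if_pos hFx1, hind, integral_indicator measurableSet_Ioc,
      integral_Ioc_eq_integral_Ioo, hPfeq]
  -- integrability
  have hcont : ∀ k : ℝ → ℝ, Continuous k → IntegrableOn k ι := fun k hk =>
    (hk.integrableOn_Icc (a := x) (b := b0)).mono_set Ioo_subset_Icc_self
  have hfι : IntegrableOn f ι := hInt.integrableOn
  have hwfι : IntegrableOn (fun y => (y - x) * f y) ι := by
    have hmeas : AEStronglyMeasurable (fun y : ℝ => y - x) (volume.restrict ι) := by fun_prop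
    apply Integrable.bdd_mul (c := c) hfι hmeas
    rw [ae_restrict_iff' measurableSet_Ioo]
    apply Filter.Eventually.of_forall
    intro y hy
    rw [Real.norm_eq_abs, abs_of_nonneg (by linarith [hy.1])]
    linarith [hy.2]
  have hQf0 : 0 ≤ Qf :=
    setIntegral_nonneg measurableSet_Ioo fun y hy => mul_nonneg (by linarith [hy.1]) (hf0 y)
  have hwmono : MonotoneOn (fun y : ℝ => y - x) ι := fun a _ b _ hab' => by simp only; linarith
  constructor
  · -- lower bound
    by_cases hSbot : leftSlopeEnd φ a0 b0 = ⊥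
    · rw [hSbot, EReal.bot_mul_coe_of_pos hc]
      have hnuB : nuE ⊥ = 0 := by simp [nuE]
      rw [hnuB, mul_zero, hμx]
      exact mul_nonneg (inv_nonneg.mpr hPf.le) hQf0
    · have hSdef : leftSlopeEnd φ a0 b0 = sInf {s : EReal | ∃ y z : ℝ, a0 < y ∧ y < z ∧ z < b0 ∧
          s = (φ z - φ y) * (((z - y)⁻¹ : ℝ) : EReal)} := rfl
      set y1 := a0 + (b0 - a0) / 3 with hy1d
      set z1 := a0 + 2 * (b0 - a0) / 3 with hz1d
      have hy1m : y1 ∈ Ioo a0 b0 := ⟨by rw [hy1d]; linarith, by rw [hy1d]; linarith⟩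
      have hz1m : z1 ∈ Ioo a0 b0 := ⟨by rw [hz1d]; linarith, by rw [hz1d]; linarith⟩
      have hyz1 : y1 < z1 := by rw [hy1d, hz1d]; linarith
      have hS'top : leftSlopeEnd φ a0 b0 ≠ ⊤ := by
        have hmem : ((((φ z1).toReal - (φ y1).toReal) * (z1 - y1)⁻¹ : ℝ) : EReal)
            ∈ {s : EReal | ∃ y z : ℝ, a0 < y ∧ y < z ∧ z < b0 ∧
                s = (φ z - φ y) * (((z - y)⁻¹ : ℝ) : EReal)} := by
          refine ⟨y1, z1, hy1m.1, hyz1, hz1m.2, ?_⟩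
          conv_rhs => rw [← EReal.coe_toReal (hφ_top z1) (hfne z1 hz1m),
            ← EReal.coe_toReal (hφ_top y1) (hfne y1 hy1m)]
          norm_cast
        have h5 := sInf_le hmem
        rw [← hSdef] at h5
        exact ne_top_of_le_ne_top (EReal.coe_ne_top _) h5
      set r := (leftSlopeEnd φ a0 b0).toReal with hrd
      have hSr : (r : EReal) = leftSlopeEnd φ a0 b0 := EReal.coe_toReal hS'top hSbot
      have hslope : ∀ y z, x < y → y < z → z < b0 →
          r * (z - y) ≤ (φ z).toReal - (φ y).toReal := by
        intro y z h1 h2 h3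
        have hφy := hfne y ⟨lt_of_le_of_lt hax h1, by linarith⟩
        have hφz := hfne z ⟨by linarith [lt_of_le_of_lt hax h1], h3⟩
        have hmem : ((((φ z).toReal - (φ y).toReal) * (z - y)⁻¹ : ℝ) : EReal)
            ∈ {s : EReal | ∃ y' z' : ℝ, a0 < y' ∧ y' < z' ∧ z' < b0 ∧
                s = (φ z' - φ y') * (((z' - y')⁻¹ : ℝ) : EReal)} := by
          refine ⟨y, z, lt_of_le_of_lt hax h1, h2, h3, ?_⟩
          conv_rhs => rw [← EReal.coe_toReal (hφ_top z) hφz, ← EReal.coe_toReal (hφ_top y) hφy]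
          norm_cast
        have hle := sInf_le hmem
        rw [← hSdef, ← hSr, EReal.coe_le_coe_iff] at hle
        have hzy : (0:ℝ) < z - y := by linarith
        have h4 := mul_le_mul_of_nonneg_right hle hzy.le
        rwa [mul_assoc, inv_mul_cancel₀ hzy.ne', mul_one] at h4
      set h := fun y : ℝ => Real.exp (r * (y - x)) with hhd
      have hyp : ∀ y ∈ ι, ∀ z ∈ ι, y ≤ z → h z * f y ≤ h y * f z := by
        intro y hy z hz hle
        rcases eq_or_lt_of_le hle with rfl | hlt
        · exact le_refl _
        · have hφy := hfne y (hιsub hy)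
          have hφz := hfne z (hιsub hz)
          have h2 := hslope y z hy.1 hlt hz.2
          rw [ffact z hφz, ffact y hφy, hhd]
          rw [← Real.exp_add, ← Real.exp_add]
          apply Real.exp_le_exp.mpr
          nlinarith [h2]
      have hconth : Continuous h := Real.continuous_exp.comp
        (continuous_const.mul (continuous_id.sub continuous_const))
      have hhι : IntegrableOn h ι := hcont h hconth
      have hwhι : IntegrableOn (fun y => (y - x) * h y) ι :=
        hcont _ ((continuous_id.sub continuous_const).mul hconth)
      have hch := cheb measurableSet_Ioo h f (fun y => y - x) hhι hfι hwhι hwfι hwmono hyp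
      rw [← hSr, ← EReal.coe_mul]
      rw [nuE_coe]
      set D := ∫ u in Icc (0:ℝ) 1, Real.exp ((r * c) * u) with hDd
      set N := ∫ u in Icc (0:ℝ) 1, u * Real.exp ((r * c) * u) with hNd
      have hD : 0 < D := denom_pos _
      have hPh : (∫ y in ι, h y) = c * D := nu_calc0 x b0 hxb r
      have hQh : (∫ y in ι, (y - x) * h y) = c ^ 2 * N := nu_calc1 x b0 hxb r
      rw [hPh, hQh] at hch
      have hfin : c * N * Pf ≤ D * Qf := by nlinarith [hch, hc]
      have hnuR : nuR (r * c) = N / D := rfl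
      rw [hnuR, hμx, show c * (N / D) = (c * N) / D by ring, div_le_iff₀ hD,
        show Pf⁻¹ * Qf * D = (D * Qf) / Pf by ring, le_div_iff₀ hPf]
      exact hfin
  · -- upper bound
    by_cases hStop : rightSlope φ b0 x = ⊤
    · rw [hStop, EReal.top_mul_of_pos (EReal.coe_pos.mpr hc)]
      have hnuT : nuE ⊤ = 1 := by simp [nuE]
      rw [hnuT, mul_one]
      have hQle : Qf ≤ c * Pf := by
        have h1 : (∫ y in ι, (y - x) * f y) ≤ ∫ y in ι, c * f y := by
          apply setIntegral_mono_on hwfι (hfι.const_mul c) measurableSet_Ioo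
          intro y hy
          exact mul_le_mul_of_nonneg_right (by linarith [hy.2]) (hf0 y)
        rw [integral_const_mul] at h1
        exact h1
      rw [hμx, inv_mul_le_iff₀ hPf]
      linarith
    · have hSdef : rightSlope φ b0 x = sSup {s : EReal | ∃ y : ℝ, x < y ∧ y < b0 ∧
          s = (φ y - φ x) * (((y - x)⁻¹ : ℝ) : EReal)} := rfl
      have hy0 : (x + b0) / 2 ∈ Ioo a0 b0 := ⟨by linarith, by linarith⟩
      have hy0x : x < (x + b0) / 2 := by linarith
      have hy0b : (x + b0) / 2 < b0 := by linarith
      have hφx : φ x ≠ ⊥ := by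
        intro hbot
        apply hStop
        apply top_le_iff.mp
        rw [hSdef]
        apply le_sSup
        refine ⟨(x + b0) / 2, hy0x, hy0b, ?_⟩
        rw [hbot, EReal.sub_bot (hfne _ hy0),
          EReal.top_mul_of_pos (EReal.coe_pos.mpr (inv_pos.mpr (by linarith)))]
      have hSbot : rightSlope φ b0 x ≠ ⊥ := by
        have hmem : ((((φ ((x + b0) / 2)).toReal - (φ x).toReal) * ((x + b0) / 2 - x)⁻¹ : ℝ) : EReal)
            ∈ {s : EReal | ∃ y : ℝ, x < y ∧ y < b0 ∧
                s = (φ y - φ x) * (((y - x)⁻¹ : ℝ) : EReal)} := by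
          refine ⟨(x + b0) / 2, hy0x, hy0b, ?_⟩
          conv_rhs => rw [← EReal.coe_toReal (hφ_top _) (hfne _ hy0),
            ← EReal.coe_toReal (hφ_top x) hφx]
          norm_cast
        have h5 := le_sSup hmem
        rw [← hSdef] at h5
        exact ((EReal.bot_lt_coe _).trans_le h5).ne'
      set r := (rightSlope φ b0 x).toReal with hrd
      have hSr : (r : EReal) = rightSlope φ b0 x := EReal.coe_toReal hStop hSbot
      have hslope : ∀ y, x < y → y < b0 → (φ y).toReal - (φ x).toReal ≤ r * (y - x) := by
        intro y hy1 hy2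
        have hφy := hfne y ⟨lt_of_le_of_lt hax hy1, hy2⟩
        have hmem : ((((φ y).toReal - (φ x).toReal) * (y - x)⁻¹ : ℝ) : EReal)
            ∈ {s : EReal | ∃ y' : ℝ, x < y' ∧ y' < b0 ∧
                s = (φ y' - φ x) * (((y' - x)⁻¹ : ℝ) : EReal)} := by
          refine ⟨y, hy1, hy2, ?_⟩
          conv_rhs => rw [← EReal.coe_toReal (hφ_top y) hφy, ← EReal.coe_toReal (hφ_top x) hφx]
          norm_cast
        have hle := le_sSup hmem
        rw [← hSdef, ← hSr, EReal.coe_le_coe_iff] at hle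
        have hyx : (0:ℝ) < y - x := by linarith
        have h3 := mul_le_mul_of_nonneg_right hle hyx.le
        rwa [mul_assoc, inv_mul_cancel₀ hyx.ne', mul_one] at h3
      set h := fun y : ℝ => Real.exp (r * (y - x)) with hhd
      have hyp : ∀ y ∈ ι, ∀ z ∈ ι, y ≤ z → f z * h y ≤ f y * h z := by
        intro y hy z hz hle
        rcases eq_or_lt_of_le hle with rfl | hlt
        · exact le_refl _
        · have hφy := hfne y (hιsub hy)
          have hφz := hfne z (hιsub hz)
          have key := concave_key φ hφ_top hφ_concave hy.1 hlt hφx hφz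
          have k2 := key.2
          have hd : (0:ℝ) < z - x := by linarith [hy.1]
          rw [div_mul_eq_mul_div, div_mul_eq_mul_div, ← add_div, div_le_iff₀ hd] at k2
          have h2 := hslope z hz.1 hz.2
          rw [ffact z hφz, ffact y hφy, hhd]
          rw [← Real.exp_add, ← Real.exp_add]
          apply Real.exp_le_exp.mpr
          nlinarith [k2, mul_le_mul_of_nonneg_left h2 (show (0:ℝ) ≤ z - y by linarith), hd]
      have hconth : Continuous h := Real.continuous_exp.comp
        (continuous_const.mul (continuous_id.sub continuous_const))
      have hhι : IntegrableOn h ι := hcont h hconth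
      have hwhι : IntegrableOn (fun y => (y - x) * h y) ι :=
        hcont _ ((continuous_id.sub continuous_const).mul hconth)
      have hch := cheb measurableSet_Ioo f h (fun y => y - x) hfι hhι hwfι hwhι hwmono hyp
      rw [← hSr, ← EReal.coe_mul]
      rw [nuE_coe]
      set D := ∫ u in Icc (0:ℝ) 1, Real.exp ((r * c) * u) with hDd
      set N := ∫ u in Icc (0:ℝ) 1, u * Real.exp ((r * c) * u) with hNd
      have hD : 0 < D := denom_pos _
      have hPh : (∫ y in ι, h y) = c * D := nu_calc0 x b0 hxb r
      have hQh : (∫ y in ι, (y - x) * h y) = c ^ 2 * N := nu_calc1 x b0 hxb r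
      rw [hPh, hQh] at hch
      have hfin : Qf * D ≤ Pf * (c * N) := by nlinarith [hch, hc]
      have hnuR : nuR (r * c) = N / D := rfl
      rw [hnuR, hμx, inv_mul_le_iff₀ hPf,
        show Pf * (c * (N / D)) = Pf * (c * N) / D by ring, le_div_iff₀ hD]
      exact hfin
end

section
/- Let f = exp(φ) be a log-concave probability density whose support is unbounded to the right (b₀ = ∞). Then for any x in the support with φ'(x+) < 0, −1/φ'(∞−) ≤ μ(x) ≤ −1/φ'(x+), where φ'(∞−) := lim_{x→∞} φ'(x+) ∈ [−∞, 0) and −1/(−∞) := 0. -/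
open MeasureTheory Set Filter
open scoped ENNReal

/-- Right-sided derivative `φ'(x+)` of a concave `φ` whose domain is unbounded
to the right, as the supremum of the slopes. -/
noncomputable def rightSlopeInf (φ : ℝ → EReal) (x : ℝ) : EReal :=
  sSup {s : EReal | ∃ y : ℝ, x < y ∧ s = (φ y - φ x) * (((y - x)⁻¹ : ℝ) : EReal)}

/-- The asymptotic slope `φ'(∞-) = lim_{x→∞} φ'(x+)` of a concave `φ`, as the
infimum of all slopes over the halfline `(a₀,∞)`. -/
noncomputable def slopeAtInfty (φ : ℝ → EReal) (a0 : ℝ) : EReal :=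
  sInf {s : EReal | ∃ y z : ℝ, a0 < y ∧ y < z ∧
    s = (φ z - φ y) * (((z - y)⁻¹ : ℝ) : EReal)}

/-- `-1/e` for `e ∈ [-∞, 0)`, with the convention `-1/(-∞) = 0`. -/
noncomputable def negInv (e : EReal) : ℝ := if e = ⊥ then 0 else -((e.toReal)⁻¹)

lemma expE_nonneg (e : EReal) : 0 ≤ expE e := by
  unfold expE; split
  · exact le_refl 0
  · exact (Real.exp_pos _).le

lemma measurable_expE : Measurable expE := by
  unfold expE
  exact Measurable.ite (by simp) measurable_const
    (Real.continuous_exp.measurable.comp measurable_ereal_toReal)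

lemma expE_eq_zero_iff {e : EReal} : expE e = 0 ↔ e = ⊥ := by
  unfold expE; split
  · simp_all
  · constructor
    · intro h; exact absurd h (Real.exp_pos _).ne'
    · intro h; simp_all

lemma expE_coe (r : ℝ) : expE (r : EReal) = Real.exp r := by
  unfold expE
  rw [if_neg (EReal.coe_ne_bot r), EReal.toReal_coe]

lemma concave_mid (φ : ℝ → EReal) (hφ_top : ∀ x, φ x ≠ ⊤)
    (hφ_concave : ∀ x y t : ℝ, 0 ≤ t → t ≤ 1 →
      (t : EReal) * φ x + ((1 - t : ℝ) : EReal) * φ y ≤ φ (t * x + (1 - t) * y))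
    {u v w : ℝ} (h1 : u < v) (h2 : v < w) {a b : ℝ}
    (ha : φ u = (a : EReal)) (hb : φ w = (b : EReal)) :
    ∃ p : ℝ, φ v = (p : EReal) ∧ (w - v) * a + (v - u) * b ≤ p * (w - u) := by
  have hwu : (0:ℝ) < w - u := by linarith
  set t : ℝ := (w - v) / (w - u) with ht
  have ht0 : 0 ≤ t := div_nonneg (by linarith) hwu.le
  have ht1 : t ≤ 1 := by rw [ht, div_le_one hwu]; linarith
  have htwu : t * (w - u) = w - v := div_mul_cancel₀ _ hwu.ne'
  have hmid : t * u + (1 - t) * w = v := by nlinarith [htwu]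
  have hc := hφ_concave u w t ht0 ht1
  rw [hmid, ha, hb, ← EReal.coe_mul, ← EReal.coe_mul, ← EReal.coe_add] at hc
  have hne_bot : φ v ≠ ⊥ := by
    intro h; rw [h] at hc; exact (EReal.coe_ne_bot _) (le_bot_iff.1 hc)
  refine ⟨(φ v).toReal, (EReal.coe_toReal (hφ_top v) hne_bot).symm, ?_⟩
  have hle : t * a + (1 - t) * b ≤ (φ v).toReal := by
    rw [← EReal.coe_le_coe_iff, EReal.coe_toReal (hφ_top v) hne_bot]; exact hc
  have hexp : (t * a + (1 - t) * b) * (w - u) = (w - v) * a + (v - u) * b := by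
    linear_combination (a - b) * htwu
  nlinarith [mul_le_mul_of_nonneg_right hle hwu.le]

lemma shift_aux (g : ℝ → ℝ≥0∞) (x t : ℝ) :
    ∫⁻ y in Set.Ioi t, g y = ∫⁻ z in Set.Ioi x, g (z + (t - x)) := by
  rw [← lintegral_indicator measurableSet_Ioi, ← lintegral_indicator measurableSet_Ioi,
    ← lintegral_add_right_eq_self (fun y => (Set.Ioi t).indicator g y) (t - x)]
  congr 1; funext z
  by_cases h : x < z
  · rw [Set.indicator_of_mem (show z + (t - x) ∈ Set.Ioi t by simp only [Set.mem_Ioi]; linarith) g,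
      Set.indicator_of_mem (show z ∈ Set.Ioi x from h) (fun z => g (z + (t - x)))]
  · rw [Set.indicator_of_notMem
      (show z + (t - x) ∉ Set.Ioi t by
        simp only [Set.mem_Ioi, not_lt]; linarith [le_of_not_gt h]) g,
      Set.indicator_of_notMem (by simpa using h)]

lemma exp_lintegral (x : ℝ) {c : ℝ} (hc : c < 0) :
    ∫⁻ t in Set.Ioi x, ENNReal.ofReal (Real.exp (c * (t - x))) = ENNReal.ofReal (-c⁻¹) := by
  have hint : IntegrableOn (fun t => Real.exp (c * (t - x))) (Set.Ioi x) := by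
    have h := (exp_neg_integrableOn_Ioi x (neg_pos.2 hc)).const_mul (Real.exp (-(c * x)))
    have he : (fun t => Real.exp (c * (t - x)))
        = fun t => Real.exp (-(c * x)) * Real.exp (-(-c) * t) := by
      funext t; rw [← Real.exp_add]; ring_nf
    rw [he]; exact h
  have hderiv : ∀ t ∈ Set.Ici x,
      HasDerivAt (fun t => c⁻¹ * Real.exp (c * (t - x))) (Real.exp (c * (t - x))) t := by
    intro t _
    have h1 : HasDerivAt (fun t : ℝ => c * (t - x)) c t := by
      simpa using ((hasDerivAt_id t).sub_const x).const_mul c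
    have h2 := (Real.hasDerivAt_exp (c * (t - x))).comp t h1
    have h3 := h2.const_mul c⁻¹
    have h4 : c⁻¹ * (Real.exp (c * (t - x)) * c) = Real.exp (c * (t - x)) := by
      rw [mul_comm (Real.exp (c * (t - x))) c, ← mul_assoc, inv_mul_cancel₀ hc.ne, one_mul]
    rw [h4] at h3; exact h3
  have htend : Tendsto (fun t => c⁻¹ * Real.exp (c * (t - x))) atTop (nhds 0) := by
    have h1 : Tendsto (fun t : ℝ => c * (t - x)) atTop atBot :=
      (tendsto_const_mul_atBot_of_neg hc).2 (tendsto_atTop_add_const_right atTop (-x) tendsto_id)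
    have h2 := (Real.tendsto_exp_atBot.comp h1).const_mul c⁻¹
    simpa using h2
  have hval := integral_Ioi_of_hasDerivAt_of_tendsto' hderiv hint htend
  simp only [sub_self, mul_zero, Real.exp_zero, mul_one, zero_sub] at hval
  rw [← ofReal_integral_eq_lintegral_ofReal hint
    (Filter.Eventually.of_forall fun t => (Real.exp_pos _).le), hval]

lemma fubini_aux (g : ℝ → ℝ≥0∞) (hg : Measurable g) (x : ℝ) :
    ∫⁻ y in Set.Ioi x, ENNReal.ofReal (y - x) * g y
      = ∫⁻ t in Set.Ioi x, ∫⁻ y in Set.Ioi t, g y := by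
  have hset : MeasurableSet {q : ℝ × ℝ | x < q.1 ∧ q.1 < q.2} :=
    (measurableSet_lt measurable_const measurable_fst).inter
      (measurableSet_lt measurable_fst measurable_snd)
  set k : ℝ × ℝ → ℝ≥0∞ :=
    fun q => ({q : ℝ × ℝ | x < q.1 ∧ q.1 < q.2}).indicator (fun q => g q.2) q with hk
  have hkm : Measurable k := (hg.comp measurable_snd).indicator hset
  have swap : ∫⁻ t, ∫⁻ y, k (t, y) = ∫⁻ y, ∫⁻ t, k (t, y) :=
    lintegral_lintegral_swap hkm.aemeasurable
  have hL : ∫⁻ t, ∫⁻ y, k (t, y) = ∫⁻ t in Set.Ioi x, ∫⁻ y in Set.Ioi t, g y := by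
    rw [← lintegral_indicator measurableSet_Ioi]
    apply lintegral_congr
    intro t
    by_cases hxt : x < t
    · rw [Set.indicator_of_mem (show t ∈ Set.Ioi x from hxt)]
      rw [← lintegral_indicator (measurableSet_Ioi (a := t))]
      apply lintegral_congr
      intro y
      by_cases hty : t < y
      · rw [Set.indicator_of_mem (show y ∈ Set.Ioi t from hty)]
        exact Set.indicator_of_mem
          (show ((t,y) : ℝ × ℝ) ∈ {q : ℝ × ℝ | x < q.1 ∧ q.1 < q.2} from ⟨hxt, hty⟩) _
      · rw [Set.indicator_of_notMem (by simpa using hty)]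
        exact Set.indicator_of_notMem
          (show ((t,y) : ℝ × ℝ) ∉ {q : ℝ × ℝ | x < q.1 ∧ q.1 < q.2} from fun hc => hty hc.2) _
    · rw [Set.indicator_of_notMem (by simpa using hxt)]
      have : ∀ y : ℝ, k (t, y) = 0 := fun y =>
        Set.indicator_of_notMem (fun hc => hxt hc.1) _
      simp [this]
  have hR : ∫⁻ y, ∫⁻ t, k (t, y) = ∫⁻ y in Set.Ioi x, ENNReal.ofReal (y - x) * g y := by
    rw [← lintegral_indicator measurableSet_Ioi]
    apply lintegral_congr
    intro y
    have hky : ∀ t : ℝ, k (t, y) = (Set.Ioo x y).indicator (fun _ => g y) t := by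
      intro t
      simp only [hk]
      by_cases h : x < t ∧ t < y
      · rw [Set.indicator_of_mem
            (show ((t,y) : ℝ × ℝ) ∈ {q : ℝ × ℝ | x < q.1 ∧ q.1 < q.2} from h),
          Set.indicator_of_mem (show t ∈ Set.Ioo x y from h)]
      · rw [Set.indicator_of_notMem
            (show ((t,y) : ℝ × ℝ) ∉ {q : ℝ × ℝ | x < q.1 ∧ q.1 < q.2} from h),
          Set.indicator_of_notMem (show t ∉ Set.Ioo x y from h)]
    simp_rw [hky]
    rw [lintegral_indicator measurableSet_Ioo, setLIntegral_const, Real.volume_Ioo]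
    by_cases hxy : x < y
    · rw [Set.indicator_of_mem (show y ∈ Set.Ioi x from hxy), mul_comm]
    · rw [Set.indicator_of_notMem (by simpa using hxy)]
      have : y - x ≤ 0 := by linarith [le_of_not_gt hxy]
      rw [ENNReal.ofReal_eq_zero.2 this, mul_zero]
  rw [← hL, swap, hR]

/-- For a log-concave density `f = e^φ` with support unbounded to the right,
`-1/φ'(∞-) ≤ μ(x) ≤ -1/φ'(x+)` whenever `φ'(x+) < 0`. -/
theorem stmt_7
    (φ : ℝ → EReal) (hφ_top : ∀ x, φ x ≠ ⊤)
    (hφ_concave : ∀ x y t : ℝ, 0 ≤ t → t ≤ 1 →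
      (t : EReal) * φ x + ((1 - t : ℝ) : EReal) * φ y ≤ φ (t * x + (1 - t) * y))
    (hφ_usc : UpperSemicontinuous φ)
    (f : ℝ → ℝ) (hf : ∀ x, f x = expE (φ x)) (hf_int : ∫ x, f x = 1)
    (a0 : ℝ)
    (F : ℝ → ℝ) (hF : ∀ x, F x = ∫ y in Iic x, f y)
    (hF_lt_one : ∀ x, F x < 1)
    (hsupp : ∀ x, 0 < F x ↔ a0 < x)
    (μ : ℝ → ℝ)
    (hμ : ∀ x, μ x = if F x < 1 then (1 - F x)⁻¹ * ∫ y, max (y - x) 0 * f y else 0)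
    (x : ℝ) (hx : a0 < x) (hslope : rightSlopeInf φ x < 0) :
    negInv (slopeAtInfty φ a0) ≤ μ x ∧ μ x ≤ negInv (rightSlopeInf φ x) := by
  -- basic facts about f
  have hf_nonneg : ∀ y, 0 ≤ f y := fun y => (hf y) ▸ expE_nonneg _
  have hf_meas : Measurable f := by
    have hfe : f = fun y => expE (φ y) := funext hf
    rw [hfe]; exact measurable_expE.comp hφ_usc.measurable
  have hf_integrable : Integrable f := by
    by_contra h
    rw [integral_undef h] at hf_int; norm_num at hf_int
  have hGx_pos : (0:ℝ) < 1 - F x := by linarith [hF_lt_one x]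
  -- splitting the integral
  have hIoi : ∀ z : ℝ, ∫ y in Ioi z, f y = 1 - F z := by
    intro z
    have h1 := integral_add_compl (measurableSet_Iic (a := z)) hf_integrable
    rw [compl_Iic] at h1
    rw [hF z]
    linarith [h1.trans hf_int]
  -- a point to the right with positive density
  have hy0 : ∃ y0, x < y0 ∧ f y0 ≠ 0 := by
    by_contra h; push_neg at h
    have hz : ∫ y in Ioi x, f y = 0 := by
      apply setIntegral_eq_zero_of_forall_eq_zero
      intro y hy; exact h y hy
    rw [hIoi x] at hz; linarith
  obtain ⟨y0, hxy0, hfy0⟩ := hy0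
  -- a point to the left with positive density
  have hw : ∃ w, w < x ∧ f w ≠ 0 := by
    by_contra h; push_neg at h
    have hFx : F x = 0 := by
      rw [hF x]
      have : ∫ y in Iio x, f y = 0 := by
        apply setIntegral_eq_zero_of_forall_eq_zero
        intro y hy; exact h y hy
      rw [← this]
      exact integral_Iic_eq_integral_Iio
    have := (hsupp x).2 hx
    linarith
  obtain ⟨w, hwx, hfw⟩ := hw
  -- φ values
  have hφ_ne_bot_of_f : ∀ z, f z ≠ 0 → φ z ≠ ⊥ := by
    intro z hz hbot
    exact hz (by rw [hf z, expE_eq_zero_iff]; exact hbot)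
  have hφw : φ w = ((φ w).toReal : EReal) :=
    (EReal.coe_toReal (hφ_top w) (hφ_ne_bot_of_f w hfw)).symm
  have hφy0 : φ y0 = ((φ y0).toReal : EReal) :=
    (EReal.coe_toReal (hφ_top y0) (hφ_ne_bot_of_f y0 hfy0)).symm
  obtain ⟨ax, hφx, -⟩ := concave_mid φ hφ_top hφ_concave hwx hxy0 hφw hφy0
  -- slope at x facts
  have hslope0 := hslope
  have he0 : ((((φ y0).toReal - ax) * (y0 - x)⁻¹ : ℝ) : EReal) ≤ rightSlopeInf φ x := by
    have h : (φ y0 - φ x) * (((y0 - x)⁻¹ : ℝ) : EReal) ≤ rightSlopeInf φ x := by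
      unfold rightSlopeInf; exact le_sSup ⟨y0, hxy0, rfl⟩
    rwa [hφy0, hφx, ← EReal.coe_sub, ← EReal.coe_mul] at h
  have hs_ne_bot : rightSlopeInf φ x ≠ ⊥ := fun hb => by
    rw [hb] at he0; exact EReal.coe_ne_bot _ (le_bot_iff.1 he0)
  have hs_ne_top : rightSlopeInf φ x ≠ ⊤ := by
    intro hb
    rw [hb] at hslope0
    exact absurd hslope0 (by simp)
  set c : ℝ := (rightSlopeInf φ x).toReal with hc_def
  have hsc : rightSlopeInf φ x = (c : EReal) := (EReal.coe_toReal hs_ne_top hs_ne_bot).symm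
  have hc_neg : c < 0 := by
    have h := hslope0; rw [hsc] at h; exact EReal.coe_neg'.1 h
  -- key real inequality at x
  have key1 : ∀ v : ℝ, x < v → ∀ bv : ℝ, φ v = (bv : EReal) → bv - ax ≤ c * (v - x) := by
    intro v hv bv hbv
    have h : (φ v - φ x) * (((v - x)⁻¹ : ℝ) : EReal) ≤ rightSlopeInf φ x := by
      unfold rightSlopeInf; exact le_sSup ⟨v, hv, rfl⟩
    rw [hbv, hφx, ← EReal.coe_sub, ← EReal.coe_mul, hsc, EReal.coe_le_coe_iff] at h
    rw [← div_eq_mul_inv] at h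
    exact (div_le_iff₀ (by linarith)).1 h
  -- pointwise exponential upper bound
  have hupper : ∀ u v : ℝ, x ≤ u → u < v → f v ≤ f u * Real.exp (c * (v - u)) := by
    intro u v hxu huv
    by_cases hbot : φ v = ⊥
    · rw [hf v, hbot]
      have h0 : expE ⊥ = 0 := by simp [expE]
      rw [h0]
      exact mul_nonneg (hf_nonneg u) (Real.exp_pos _).le
    · have hφv : φ v = ((φ v).toReal : EReal) := (EReal.coe_toReal (hφ_top v) hbot).symm
      set bv : ℝ := (φ v).toReal
      have hk := key1 v (lt_of_le_of_lt hxu huv) bv hφv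
      rcases eq_or_lt_of_le hxu with rfl | hxu'
      · rw [hf v, hφv, expE_coe, hf x, hφx, expE_coe, ← Real.exp_add]
        exact Real.exp_le_exp.2 (by linarith)
      · obtain ⟨p, hφu, hcomb⟩ := concave_mid φ hφ_top hφ_concave hxu' huv hφx hφv
        have hgoal : bv ≤ p + c * (v - u) := by
          have hA : (v - u) * (bv - ax) ≤ (v - u) * (c * (v - x)) :=
            mul_le_mul_of_nonneg_left hk (by linarith)
          nlinarith [hcomb, hA]
        rw [hf v, hφv, expE_coe, hf u, hφu, expE_coe, ← Real.exp_add]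
        exact Real.exp_le_exp.2 (by linarith)
  -- integral machinery
  set fE : ℝ → ℝ≥0∞ := fun y => ENNReal.ofReal (f y) with hfE_def
  have hfE_meas : Measurable fE := ENNReal.measurable_ofReal.comp hf_meas
  set J : ℝ → ℝ≥0∞ := fun t => ∫⁻ y in Ioi t, fE y with hJ_def
  have hJ_eq : ∀ z : ℝ, J z = ENNReal.ofReal (1 - F z) := by
    intro z
    rw [← hIoi z, ofReal_integral_eq_lintegral_ofReal hf_integrable.integrableOn
      (Filter.Eventually.of_forall fun y => hf_nonneg y)]
  have hJx_ne_top : J x ≠ ⊤ := by rw [hJ_eq x]; exact ENNReal.ofReal_ne_top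
  have hJ_ub : ∀ t, x < t → J t ≤ J x * ENNReal.ofReal (Real.exp (c * (t - x))) := by
    intro t ht
    have h1 : J t = ∫⁻ z in Ioi x, fE (z + (t - x)) := shift_aux fE x t
    rw [h1]
    calc ∫⁻ z in Ioi x, fE (z + (t - x))
        ≤ ∫⁻ z in Ioi x, fE z * ENNReal.ofReal (Real.exp (c * (t - x))) := by
          refine setLIntegral_mono' measurableSet_Ioi fun z hz => ?_
          have hb := hupper z (z + (t - x)) (le_of_lt hz) (by linarith)
          have harg : z + (t - x) - z = t - x := by ring
          rw [harg] at hb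
          calc fE (z + (t - x)) = ENNReal.ofReal (f (z + (t - x))) := rfl
            _ ≤ ENNReal.ofReal (f z * Real.exp (c * (t - x))) := ENNReal.ofReal_le_ofReal hb
            _ = fE z * ENNReal.ofReal (Real.exp (c * (t - x))) := ENNReal.ofReal_mul (hf_nonneg z)
      _ = J x * ENNReal.ofReal (Real.exp (c * (t - x))) := lintegral_mul_const _ hfE_meas
  have hI1 : ∫⁻ y in Ioi x, ENNReal.ofReal ((y - x) * f y) = ∫⁻ t in Ioi x, J t := by
    have hcong : ∀ᵐ y ∂(volume : Measure ℝ), y ∈ Ioi x →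
        ENNReal.ofReal ((y - x) * f y) = ENNReal.ofReal (y - x) * fE y := by
      refine Filter.Eventually.of_forall fun y hy => ?_
      exact ENNReal.ofReal_mul (by linarith [mem_Ioi.1 hy] : (0:ℝ) ≤ y - x)
    rw [setLIntegral_congr_fun_ae measurableSet_Ioi hcong]
    exact fubini_aux fE hfE_meas x
  have hI_ub : ∫⁻ t in Ioi x, J t ≤ ENNReal.ofReal (1 - F x) * ENNReal.ofReal (-c⁻¹) := by
    calc ∫⁻ t in Ioi x, J t
        ≤ ∫⁻ t in Ioi x, J x * ENNReal.ofReal (Real.exp (c * (t - x))) :=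
          setLIntegral_mono' measurableSet_Ioi fun t ht => hJ_ub t ht
      _ = J x * ∫⁻ t in Ioi x, ENNReal.ofReal (Real.exp (c * (t - x))) :=
          lintegral_const_mul' _ _ hJx_ne_top
      _ = ENNReal.ofReal (1 - F x) * ENNReal.ofReal (-c⁻¹) := by
          rw [hJ_eq x, exp_lintegral x hc_neg]
  -- the real integrand
  set m : ℝ → ℝ := fun y => max (y - x) 0 * f y with hm_def
  have hm_meas : Measurable m := ((measurable_id.sub_const x).max measurable_const).mul hf_meas
  have hm_nonneg : ∀ y, 0 ≤ m y := fun y => mul_nonneg (le_max_right _ _) (hf_nonneg y)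
  have hm_lint : ∫⁻ y, ENNReal.ofReal (m y) = ∫⁻ y in Ioi x, ENNReal.ofReal ((y - x) * f y) := by
    rw [← lintegral_indicator measurableSet_Ioi]
    apply lintegral_congr
    intro y
    by_cases hy : x < y
    · rw [Set.indicator_of_mem (show y ∈ Ioi x from hy)]
      have : max (y - x) 0 = y - x := max_eq_left (by linarith)
      simp only [hm_def, this]
    · rw [Set.indicator_of_notMem (by simpa using hy)]
      have h0 : max (y - x) 0 = 0 := max_eq_right (by linarith [le_of_not_gt hy])
      simp only [hm_def, h0, zero_mul, ENNReal.ofReal_zero]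
  have hI_fin : ∫⁻ y, ENNReal.ofReal (m y) ≠ ⊤ := by
    rw [hm_lint, hI1]
    exact ne_top_of_le_ne_top (ENNReal.mul_ne_top ENNReal.ofReal_ne_top ENNReal.ofReal_ne_top) hI_ub
  have hm_int : Integrable m := by
    refine ⟨hm_meas.aestronglyMeasurable, ?_⟩
    rw [hasFiniteIntegral_iff_ofReal (Filter.Eventually.of_forall hm_nonneg)]
    exact lt_top_iff_ne_top.2 hI_fin
  have hm_int_eq : ∫ y, m y = (∫⁻ y, ENNReal.ofReal (m y)).toReal := by
    rw [integral_eq_lintegral_of_nonneg_ae (Filter.Eventually.of_forall hm_nonneg)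
      hm_meas.aestronglyMeasurable]
  have hμx : μ x = (1 - F x)⁻¹ * ∫ y, m y := by rw [hμ x, if_pos (hF_lt_one x)]
  have hcinv_nonneg : (0:ℝ) ≤ -c⁻¹ := neg_nonneg.2 (inv_nonpos.2 hc_neg.le)
  -- upper bound
  have hub_final : μ x ≤ -c⁻¹ := by
    have h1 : ∫ y, m y ≤ (1 - F x) * -c⁻¹ := by
      rw [hm_int_eq]
      have h2 : (∫⁻ y, ENNReal.ofReal (m y)) ≤ ENNReal.ofReal ((1 - F x) * -c⁻¹) := by
        rw [hm_lint, hI1, ENNReal.ofReal_mul hGx_pos.le]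
        exact hI_ub
      have h3 := ENNReal.toReal_mono ENNReal.ofReal_ne_top h2
      rwa [ENNReal.toReal_ofReal (mul_nonneg hGx_pos.le hcinv_nonneg)] at h3
    rw [hμx]
    calc (1 - F x)⁻¹ * ∫ y, m y ≤ (1 - F x)⁻¹ * ((1 - F x) * -c⁻¹) :=
          mul_le_mul_of_nonneg_left h1 (inv_nonneg.2 hGx_pos.le)
      _ = -c⁻¹ := inv_mul_cancel_left₀ hGx_pos.ne' _
  have hμ_nonneg : 0 ≤ μ x := by
    rw [hμx]; exact mul_nonneg (inv_nonneg.2 hGx_pos.le) (integral_nonneg hm_nonneg)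
  constructor
  · -- lower bound
    by_cases hdbot : slopeAtInfty φ a0 = ⊥
    · unfold negInv
      rw [if_pos hdbot]
      exact hμ_nonneg
    · have hd_le : slopeAtInfty φ a0 ≤ ((((φ y0).toReal - ax) * (y0 - x)⁻¹ : ℝ) : EReal) := by
        have h : slopeAtInfty φ a0 ≤ (φ y0 - φ x) * (((y0 - x)⁻¹ : ℝ) : EReal) := by
          unfold slopeAtInfty; exact sInf_le ⟨x, y0, hx, hxy0, rfl⟩
        rwa [hφy0, hφx, ← EReal.coe_sub, ← EReal.coe_mul] at h
      have hd_ne_top : slopeAtInfty φ a0 ≠ ⊤ := fun hb => by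
        rw [hb] at hd_le; exact EReal.coe_ne_top _ (top_le_iff.1 hd_le)
      set dr : ℝ := (slopeAtInfty φ a0).toReal with hdr_def
      have hdc : slopeAtInfty φ a0 = (dr : EReal) := (EReal.coe_toReal hd_ne_top hdbot).symm
      have hdr_neg : dr < 0 := by
        have h2 : slopeAtInfty φ a0 < 0 := lt_of_le_of_lt (hd_le.trans he0) hslope0
        rw [hdc] at h2; exact EReal.coe_neg'.1 h2
      -- pointwise exponential lower bound
      have hlower : ∀ u v : ℝ, a0 < u → u < v → f u * Real.exp (dr * (v - u)) ≤ f v := by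
        intro u v hau huv
        by_cases hbu : φ u = ⊥
        · rw [hf u, hbu]
          have h0 : expE ⊥ = 0 := by simp [expE]
          rw [h0, zero_mul, hf v]
          exact expE_nonneg _
        · have hφu : φ u = ((φ u).toReal : EReal) := (EReal.coe_toReal (hφ_top u) hbu).symm
          have hdlow : slopeAtInfty φ a0 ≤ (φ v - φ u) * (((v - u)⁻¹ : ℝ) : EReal) := by
            unfold slopeAtInfty; exact sInf_le ⟨u, v, hau, huv, rfl⟩
          by_cases hbv : φ v = ⊥
          · exfalso
            rw [hbv, hφu, EReal.bot_sub,
              EReal.bot_mul_coe_of_pos (inv_pos.2 (by linarith : (0:ℝ) < v - u)), hdc] at hdlow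
            exact EReal.coe_ne_bot _ (le_bot_iff.1 hdlow)
          · have hφv : φ v = ((φ v).toReal : EReal) := (EReal.coe_toReal (hφ_top v) hbv).symm
            rw [hφv, hφu, ← EReal.coe_sub, ← EReal.coe_mul, hdc, EReal.coe_le_coe_iff,
              ← div_eq_mul_inv] at hdlow
            have hkey : dr * (v - u) ≤ (φ v).toReal - (φ u).toReal :=
              (le_div_iff₀ (by linarith)).1 hdlow
            rw [hf u, hφu, expE_coe, hf v, hφv, expE_coe, ← Real.exp_add]
            exact Real.exp_le_exp.2 (by linarith)
      have hJ_lb : ∀ t, x < t → J x * ENNReal.ofReal (Real.exp (dr * (t - x))) ≤ J t := by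
        intro t ht
        have h1 : J t = ∫⁻ z in Ioi x, fE (z + (t - x)) := shift_aux fE x t
        rw [h1, ← lintegral_mul_const _ hfE_meas]
        refine setLIntegral_mono' measurableSet_Ioi fun z hz => ?_
        have hb := hlower z (z + (t - x)) (hx.trans hz) (by linarith)
        have harg : z + (t - x) - z = t - x := by ring
        rw [harg] at hb
        calc fE z * ENNReal.ofReal (Real.exp (dr * (t - x)))
            = ENNReal.ofReal (f z * Real.exp (dr * (t - x))) :=
              (ENNReal.ofReal_mul (hf_nonneg z)).symm
          _ ≤ ENNReal.ofReal (f (z + (t - x))) := ENNReal.ofReal_le_ofReal hb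
      have hI_lb : ENNReal.ofReal (1 - F x) * ENNReal.ofReal (-dr⁻¹) ≤ ∫⁻ t in Ioi x, J t := by
        calc ENNReal.ofReal (1 - F x) * ENNReal.ofReal (-dr⁻¹)
            = J x * ∫⁻ t in Ioi x, ENNReal.ofReal (Real.exp (dr * (t - x))) := by
              rw [hJ_eq x, exp_lintegral x hdr_neg]
          _ = ∫⁻ t in Ioi x, J x * ENNReal.ofReal (Real.exp (dr * (t - x))) :=
              (lintegral_const_mul' _ _ hJx_ne_top).symm
          _ ≤ ∫⁻ t in Ioi x, J t := setLIntegral_mono' measurableSet_Ioi fun t ht => hJ_lb t ht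
      have hdrinv_nonneg : (0:ℝ) ≤ -dr⁻¹ := neg_nonneg.2 (inv_nonpos.2 hdr_neg.le)
      have h1 : (1 - F x) * -dr⁻¹ ≤ ∫ y, m y := by
        rw [hm_int_eq]
        have h3 : ENNReal.ofReal ((1 - F x) * -dr⁻¹) ≤ ∫⁻ y, ENNReal.ofReal (m y) := by
          rw [ENNReal.ofReal_mul hGx_pos.le, hm_lint, hI1]
          exact hI_lb
        have h4 := ENNReal.toReal_mono hI_fin h3
        rwa [ENNReal.toReal_ofReal (mul_nonneg hGx_pos.le hdrinv_nonneg)] at h4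
      unfold negInv
      rw [if_neg hdbot]
      rw [hμx]
      have heq : -dr⁻¹ = (1 - F x)⁻¹ * ((1 - F x) * -dr⁻¹) :=
        (inv_mul_cancel_left₀ hGx_pos.ne' _).symm
      calc -(slopeAtInfty φ a0).toReal⁻¹ = -dr⁻¹ := by rw [hdr_def]
        _ = (1 - F x)⁻¹ * ((1 - F x) * -dr⁻¹) := heq
        _ ≤ (1 - F x)⁻¹ * ∫ y, m y :=
            mul_le_mul_of_nonneg_left h1 (inv_nonneg.2 hGx_pos.le)
  · -- upper bound
    unfold negInv
    rw [if_neg hs_ne_bot]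
    exact hub_final
end

section
/- Let f = exp(φ) be a log-concave probability density with b₀ = ∞, and suppose φ is differentiable on some halfline (a,∞) with Lipschitz-continuous derivative φ' < 0 there, and φ'(x) → −∞ as x → ∞. Then μ(x)·(−φ'(x)) → 1 as x → ∞, i.e. μ(x) = −(1+o(1))/φ'(x). -/
open MeasureTheory Set Filter

lemma lin_atBot (x c : ℝ) (hc : c < 0) :
    Tendsto (fun t : ℝ => c * (t - x)) atTop atBot :=
  (tendsto_const_mul_atBot_of_neg hc).mpr (tendsto_atTop_add_const_right _ _ tendsto_id)

lemma exp_lin_tendsto (x c : ℝ) (hc : c < 0) :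
    Tendsto (fun t => Real.exp (c * (t - x))) atTop (nhds 0) :=
  Real.tendsto_exp_atBot.comp (lin_atBot x c hc)

lemma mul_exp_lin_tendsto (x c : ℝ) (hc : c < 0) :
    Tendsto (fun t => (t - x) * Real.exp (c * (t - x))) atTop (nhds 0) := by
  have h1 : Tendsto (fun t : ℝ => (-c) * (t - x)) atTop atTop :=
    (tendsto_const_mul_atTop_of_pos (by linarith)).mpr
      (tendsto_atTop_add_const_right _ _ tendsto_id)
  have h2 := (Real.tendsto_pow_mul_exp_neg_atTop_nhds_zero 1).comp h1
  have h3 := h2.const_mul (-c)⁻¹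
  rw [mul_zero] at h3
  refine h3.congr fun t => ?_
  have hc' : (-c) ≠ 0 := by linarith
  simp only [Function.comp_apply, pow_one, neg_mul, neg_neg]
  have hcne : c ≠ 0 := ne_of_lt hc
  field_simp

lemma exp_integrableOn (x c : ℝ) (hc : c < 0) :
    IntegrableOn (fun y => Real.exp (c * (y - x))) (Ioi x) := by
  have h : IntegrableOn (fun y => Real.exp (-(c*x)) * Real.exp (-(-c) * y)) (Ioi x) :=
    (exp_neg_integrableOn_Ioi x (b := -c) (by linarith)).const_mul (Real.exp (-(c * x)))
  refine h.congr_fun (fun y _ => ?_) measurableSet_Ioi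
  dsimp only; rw [← Real.exp_add]; ring_nf

lemma mul_exp_integrableOn (x c : ℝ) (hc : c < 0) :
    IntegrableOn (fun y => (y - x) * Real.exp (c * (y - x))) (Ioi x) := by
  have hg : IntegrableOn (fun y => (2 / (-c)) * Real.exp ((c/2) * (y - x))) (Ioi x) :=
    (exp_integrableOn x (c/2) (by linarith)).const_mul _
  refine Integrable.mono' hg ?_ ?_
  · exact (measurable_id.sub_const x).mul
      ((measurable_id.sub_const x |>.const_mul c).exp) |>.aestronglyMeasurable
  · refine (ae_restrict_iff' measurableSet_Ioi).2 (Filter.Eventually.of_forall fun y hy => ?_)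
    have hy' : (0:ℝ) ≤ y - x := by simp at hy; linarith
    have h1 : (-(c/2)) * (y - x) ≤ Real.exp ((-(c/2)) * (y - x)) := by
      have := Real.add_one_le_exp ((-(c/2)) * (y - x)); linarith
    have hpos := Real.exp_pos (c * (y - x))
    have h2 : (y - x) * Real.exp (c * (y - x)) ≤ (2 / (-c)) * Real.exp ((c/2) * (y - x)) := by
      have h3 : (y - x) ≤ (2 / (-c)) * Real.exp ((-(c/2)) * (y - x)) := by
        rw [div_mul_eq_mul_div, le_div_iff₀ (by linarith)]
        nlinarith
      calc (y - x) * Real.exp (c * (y - x))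
          ≤ ((2 / (-c)) * Real.exp ((-(c/2)) * (y - x))) * Real.exp (c * (y - x)) := by
            exact mul_le_mul_of_nonneg_right h3 hpos.le
        _ = (2 / (-c)) * Real.exp ((c/2) * (y - x)) := by
            rw [mul_assoc, ← Real.exp_add]; ring_nf
    rw [Real.norm_eq_abs, abs_of_nonneg (mul_nonneg hy' (Real.exp_pos _).le)]
    exact h2

lemma exp_integral_Ioi (x c : ℝ) (hc : c < 0) :
    ∫ y in Ioi x, Real.exp (c * (y - x)) = (-c)⁻¹ := by
  have h := integral_Ioi_of_hasDerivAt_of_tendsto' (a := x) (m := 0)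
    (f := fun t => Real.exp (c * (t - x)) / c)
    (f' := fun t => Real.exp (c * (t - x)))
    (fun t _ => by
      have : HasDerivAt (fun t : ℝ => c * (t - x)) c t := by
        simpa using ((hasDerivAt_id t).sub_const x).const_mul c
      simpa [ne_of_lt hc] using (this.exp.div_const c))
    (exp_integrableOn x c hc)
    (by simpa using (exp_lin_tendsto x c hc).div_const c)
  rw [h]; simp

lemma mul_exp_integral_Ioi (x c : ℝ) (hc : c < 0) :
    ∫ y in Ioi x, (y - x) * Real.exp (c * (y - x)) = (c^2)⁻¹ := by
  have hcne : c ≠ 0 := ne_of_lt hc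
  have h := integral_Ioi_of_hasDerivAt_of_tendsto' (a := x) (m := 0)
    (f := fun t => ((t - x)/c - 1/c^2) * Real.exp (c * (t - x)))
    (f' := fun t => (t - x) * Real.exp (c * (t - x)))
    (fun t _ => by
      have h1 : HasDerivAt (fun t : ℝ => c * (t - x)) c t := by
        simpa using ((hasDerivAt_id t).sub_const x).const_mul c
      have h2 : HasDerivAt (fun t : ℝ => (t - x)/c - 1/c^2) (1/c) t :=
        (((hasDerivAt_id t).sub_const x).div_const c).sub_const (1/c^2)
      have := h2.mul h1.exp
      refine this.congr_deriv ?_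
      field_simp
      ring)
    (mul_exp_integrableOn x c hc)
    (by
      have h1 := ((mul_exp_lin_tendsto x c hc).div_const c).sub
        ((exp_lin_tendsto x c hc).const_mul (1/c^2))
      simpa [mul_comm, div_eq_mul_inv, sub_mul, mul_assoc, one_div] using h1.congr fun t => by ring)
  rw [h]; simp

lemma exp_integral_Ioc (x c : ℝ) (hc : c ≠ 0) :
    ∫ y in Ioc x (x+1), Real.exp (c * (y - x)) = (Real.exp c - 1)/c := by
  rw [← intervalIntegral.integral_of_le (by linarith : x ≤ x + 1)]
  rw [intervalIntegral.integral_eq_sub_of_hasDerivAt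
    (f := fun t => Real.exp (c * (t - x)) / c)
    (fun t _ => by
      have h1 : HasDerivAt (fun t : ℝ => c * (t - x)) c t := by
        simpa using ((hasDerivAt_id t).sub_const x).const_mul c
      simpa [hc] using h1.exp.div_const c)
    ((by fun_prop : Continuous fun y : ℝ => Real.exp (c * (y - x))).intervalIntegrable _ _)]
  simp [add_sub_cancel_left]
  ring

lemma mul_exp_integral_Ioc (x c : ℝ) (hc : c ≠ 0) :
    ∫ y in Ioc x (x+1), (y - x) * Real.exp (c * (y - x))
      = (Real.exp c * (c - 1) + 1)/c^2 := by
  rw [← intervalIntegral.integral_of_le (by linarith : x ≤ x + 1)]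
  rw [intervalIntegral.integral_eq_sub_of_hasDerivAt
    (f := fun t => ((t - x)/c - 1/c^2) * Real.exp (c * (t - x)))
    (fun t _ => by
      have h1 : HasDerivAt (fun t : ℝ => c * (t - x)) c t := by
        simpa using ((hasDerivAt_id t).sub_const x).const_mul c
      have h2 : HasDerivAt (fun t : ℝ => (t - x)/c - 1/c^2) (1/c) t :=
        (((hasDerivAt_id t).sub_const x).div_const c).sub_const (1/c^2)
      have := h2.mul h1.exp
      refine this.congr_deriv ?_
      field_simp
      ring)
    ((by fun_prop : Continuous fun y : ℝ => (y - x) * Real.exp (c * (y - x))).intervalIntegrable _ _)]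
  simp [add_sub_cancel_left]
  field_simp

lemma tangent_upper {a : ℝ} {φ dφ : ℝ → ℝ}
    (hderiv : ∀ x ∈ Ioi a, HasDerivAt φ (dφ x) x)
    (hanti : AntitoneOn dφ (Ioi a)) {x y : ℝ} (hx : a < x) (hxy : x ≤ y) :
    φ y ≤ φ x + dφ x * (y - x) := by
  set g : ℝ → ℝ := fun t => φ x + dφ x * (t - x) - φ t with hg
  have hsub : Icc x y ⊆ Ioi a := fun t ht => lt_of_lt_of_le hx ht.1
  have hd : ∀ t ∈ Ioo x y, HasDerivAt g (dφ x - dφ t) t := by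
    intro t ht
    have h1 : HasDerivAt (fun t : ℝ => φ x + dφ x * (t - x)) (dφ x) t := by
      simpa using (((hasDerivAt_id t).sub_const x).const_mul (dφ x)).const_add (φ x)
    exact h1.sub (hderiv t (hsub (Ioo_subset_Icc_self ht)))
  have hcont : ContinuousOn g (Icc x y) := by
    intro t ht
    exact (((((hasDerivAt_id t).sub_const x).const_mul (dφ x)).const_add (φ x)).sub
      (hderiv t (hsub ht))).continuousAt.continuousWithinAt
  have hmono : MonotoneOn g (Icc x y) := by
    apply monotoneOn_of_deriv_nonneg (convex_Icc x y) hcont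
    · intro t ht
      rw [interior_Icc] at ht
      exact (hd t ht).differentiableAt.differentiableWithinAt
    · intro t ht
      rw [interior_Icc] at ht
      rw [(hd t ht).deriv]
      have := hanti (hsub ⟨le_refl x, hxy⟩) (hsub (Ioo_subset_Icc_self ht)) ht.1.le
      linarith
  have := hmono ⟨le_refl x, hxy⟩ ⟨hxy, le_refl y⟩ hxy
  simp [hg] at this
  linarith

lemma tangent_lower {a : ℝ} {φ dφ : ℝ → ℝ}
    (hderiv : ∀ x ∈ Ioi a, HasDerivAt φ (dφ x) x)
    (hanti : AntitoneOn dφ (Ioi a)) {x y : ℝ} (hx : a < x) (hxy : x ≤ y) :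
    φ x + dφ y * (y - x) ≤ φ y := by
  set g : ℝ → ℝ := fun t => φ t - dφ y * (t - x) with hg
  have hsub : Icc x y ⊆ Ioi a := fun t ht => lt_of_lt_of_le hx ht.1
  have hd : ∀ t ∈ Ioo x y, HasDerivAt g (dφ t - dφ y) t := by
    intro t ht
    have h1 : HasDerivAt (fun t : ℝ => dφ y * (t - x)) (dφ y) t := by
      simpa using ((hasDerivAt_id t).sub_const x).const_mul (dφ y)
    exact (hderiv t (hsub (Ioo_subset_Icc_self ht))).sub h1
  have hcont : ContinuousOn g (Icc x y) := by
    intro t ht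
    exact ((hderiv t (hsub ht)).sub
      (((hasDerivAt_id t).sub_const x).const_mul (dφ y))).continuousAt.continuousWithinAt
  have hmono : MonotoneOn g (Icc x y) := by
    apply monotoneOn_of_deriv_nonneg (convex_Icc x y) hcont
    · intro t ht
      rw [interior_Icc] at ht
      exact (hd t ht).differentiableAt.differentiableWithinAt
    · intro t ht
      rw [interior_Icc] at ht
      rw [(hd t ht).deriv]
      have := hanti (hsub (Ioo_subset_Icc_self ht)) (hsub ⟨hxy, le_refl y⟩) ht.2.le
      linarith
  have := hmono ⟨le_refl x, hxy⟩ ⟨hxy, le_refl y⟩ hxy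
  simp [hg] at this
  linarith

lemma mul_exp_tendsto_atBot : Tendsto (fun s : ℝ => s * Real.exp s) atBot (nhds 0) := by
  have h := (Real.tendsto_pow_mul_exp_neg_atTop_nhds_zero 1).neg
  rw [neg_zero] at h
  have h2 := h.comp tendsto_neg_atBot_atTop
  refine h2.congr fun s => ?_
  simp [Function.comp]

/-- Let `f` be a log-concave probability density with support unbounded to the
right, `f = e^φ` on a halfline `(a,∞)` where `φ` is differentiable with
Lipschitz-continuous, negative derivative `φ'` tending to `-∞`. Then the mean
excess function satisfies `μ(x)(-φ'(x)) → 1` as `x → ∞`. -/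
theorem stmt_8
    (f : ℝ → ℝ) (hf_meas : Measurable f) (hf_nonneg : ∀ x, 0 ≤ f x)
    (hf_logconcave : ∀ x y t : ℝ, 0 ≤ t → t ≤ 1 →
      f x ^ t * f y ^ (1 - t) ≤ f (t * x + (1 - t) * y))
    (hf_int : ∫ x, f x = 1)
    (a : ℝ) (φ dφ : ℝ → ℝ)
    (hfφ : ∀ x ∈ Ioi a, f x = Real.exp (φ x))
    (hderiv : ∀ x ∈ Ioi a, HasDerivAt φ (dφ x) x)
    (K : NNReal) (hlip : LipschitzOnWith K dφ (Ioi a))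
    (hneg : ∀ x ∈ Ioi a, dφ x < 0)
    (hanti : AntitoneOn dφ (Ioi a))
    (htendsto : Tendsto dφ atTop atBot)
    (F : ℝ → ℝ) (hF : ∀ x, F x = ∫ y in Iic x, f y)
    (hF_lt_one : ∀ x, F x < 1)
    (μ : ℝ → ℝ)
    (hμ : ∀ x, μ x = if F x < 1 then (1 - F x)⁻¹ * ∫ y, max (y - x) 0 * f y else 0) :
    Tendsto (fun x => μ x * (-dφ x)) atTop (nhds 1) := by
  have hInt : Integrable f := by
    by_contra h
    rw [integral_undef h] at hf_int
    norm_num at hf_int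
  set G : ℝ → ℝ := fun x => ∫ y in Ioi x, f y with hGdef
  set M : ℝ → ℝ := fun x => ∫ y in Ioi x, (y - x) * f y with hMdef
  -- limits
  have h_d_atBot : Tendsto (fun x => dφ (x+1)) atTop atBot :=
    htendsto.comp (tendsto_atTop_add_const_right _ _ tendsto_id)
  have h_exp : Tendsto (fun x => Real.exp (dφ (x+1))) atTop (nhds 0) :=
    Real.tendsto_exp_atBot.comp h_d_atBot
  have h_dexp : Tendsto (fun x => dφ (x+1) * Real.exp (dφ (x+1))) atTop (nhds 0) :=
    mul_exp_tendsto_atBot.comp h_d_atBot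
  have h_abs : Tendsto (fun x => |dφ x|) atTop atTop :=
    tendsto_abs_atBot_atTop.comp htendsto
  have h_ratio : Tendsto (fun x => dφ (x+1) / dφ x) atTop (nhds 1) := by
    have h0 : Tendsto (fun x => dφ (x+1) / dφ x - 1) atTop (nhds 0) := by
      apply squeeze_zero_norm' (a := fun x => (K : ℝ) * |dφ x|⁻¹)
      · filter_upwards [eventually_gt_atTop a] with x hx
        have hx1 : x + 1 ∈ Ioi a := by simp; linarith
        have hc : dφ x < 0 := hneg x hx
        have hlipx := hlip.dist_le_mul (x+1) hx1 x hx
        rw [Real.dist_eq, Real.dist_eq] at hlipx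
        have hxx : |x + 1 - x| = 1 := by norm_num
        rw [hxx, mul_one] at hlipx
        have hcne : dφ x ≠ 0 := ne_of_lt hc
        have : dφ (x+1) / dφ x - 1 = (dφ (x+1) - dφ x) / dφ x := by field_simp
        rw [Real.norm_eq_abs, this, abs_div]
        rw [div_eq_mul_inv]
        gcongr
      · have := (tendsto_inv_atTop_zero.comp h_abs).const_mul (K : ℝ)
        simpa using this
    have h1 := h0.add_const 1
    rw [zero_add] at h1
    refine h1.congr fun x => by ring
  have hgt : ∀ᶠ x in atTop, a < x := eventually_gt_atTop a
  -- the two bounding functions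
  have hL : Tendsto (fun x => dφ x ^ 2 * (Real.exp (dφ (x+1)) * (dφ (x+1) - 1) + 1)
      / dφ (x+1) ^ 2) atTop (nhds 1) := by
    have h1 : Tendsto (fun x => ((dφ (x+1) / dφ x) ^ 2)⁻¹ *
        (dφ (x+1) * Real.exp (dφ (x+1)) - Real.exp (dφ (x+1)) + 1)) atTop (nhds 1) := by
      have ha := ((h_ratio.pow 2).inv₀ (by norm_num)).mul
        (((h_dexp.sub h_exp).add_const 1))
      norm_num at ha
      exact ha
    refine h1.congr' ?_
    filter_upwards [hgt] with x hx
    have hc : dφ x ≠ 0 := ne_of_lt (hneg x hx)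
    have hd : dφ (x+1) ≠ 0 := ne_of_lt (hneg _ (by simp; linarith))
    field_simp
  have hU : Tendsto (fun x => dφ (x+1) / dφ x * (1 - Real.exp (dφ (x+1)))⁻¹)
      atTop (nhds 1) := by
    have := h_ratio.mul (((tendsto_const_nhds (x := (1:ℝ))).sub h_exp).inv₀ (by norm_num))
    norm_num at this
    exact this
  have hbounds : ∀ x, a < x →
      dφ x ^ 2 * (Real.exp (dφ (x+1)) * (dφ (x+1) - 1) + 1) / dφ (x+1) ^ 2
        ≤ μ x * (-dφ x) ∧
      μ x * (-dφ x) ≤ dφ (x+1) / dφ x * (1 - Real.exp (dφ (x+1)))⁻¹ := by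
    intro x hx
    have hx1 : x + 1 ∈ Ioi a := by simp; linarith
    set c := dφ x with hcdef
    set d := dφ (x+1) with hddef
    have hc : c < 0 := hneg x hx
    have hd : d < 0 := hneg _ hx1
    have hcne : c ≠ 0 := ne_of_lt hc
    have hdne : d ≠ 0 := ne_of_lt hd
    have hfx : 0 < f x := by rw [hfφ x hx]; exact Real.exp_pos _
    have hexpd1 : Real.exp d < 1 := Real.exp_lt_one_iff.2 hd
    -- pointwise upper bound on f
    have hfub : ∀ y ∈ Ioi x, f y ≤ f x * Real.exp (c * (y - x)) := by
      intro y hy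
      have hy' : x ≤ y := le_of_lt hy
      have ht := tangent_upper hderiv hanti hx hy'
      rw [hfφ y (lt_trans hx hy), hfφ x hx, ← Real.exp_add]
      exact Real.exp_le_exp.2 (by linarith)
    -- pointwise lower bound on f on Ioc x (x+1)
    have hflb : ∀ y ∈ Ioc x (x+1), f x * Real.exp (d * (y - x)) ≤ f y := by
      intro y hy
      have hy1 : x < y := hy.1
      have hy2 : y ≤ x + 1 := hy.2
      have ht := tangent_lower hderiv hanti hx hy1.le
      have hdy : d ≤ dφ y := hanti (show y ∈ Ioi a by exact lt_trans hx hy1) hx1 hy2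
      have h2 : d * (y - x) ≤ dφ y * (y - x) :=
        mul_le_mul_of_nonneg_right hdy (by linarith)
      rw [hfφ y (lt_trans hx hy1), hfφ x hx, ← Real.exp_add]
      exact Real.exp_le_exp.2 (by linarith)
    -- integrability
    have hintexp := exp_integrableOn x c hc
    have hintmulexp := mul_exp_integrableOn x c hc
    have hMint : IntegrableOn (fun y => (y - x) * f y) (Ioi x) := by
      refine Integrable.mono' (hintmulexp.const_mul (f x)) ?_ ?_
      · exact ((measurable_id.sub_const x).mul hf_meas).aestronglyMeasurable
      · refine (ae_restrict_iff' measurableSet_Ioi).2 (Filter.Eventually.of_forall fun y hy => ?_)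
        have hy' : (0:ℝ) ≤ y - x := by simp at hy; linarith
        rw [Real.norm_eq_abs, abs_of_nonneg (mul_nonneg hy' (hf_nonneg y))]
        have := hfub y hy
        calc (y - x) * f y ≤ (y - x) * (f x * Real.exp (c * (y - x))) :=
              mul_le_mul_of_nonneg_left this hy'
          _ = f x * ((y - x) * Real.exp (c * (y - x))) := by ring
    -- G bounds
    have hGupper : G x ≤ f x * (-c)⁻¹ := by
      calc G x ≤ ∫ y in Ioi x, f x * Real.exp (c * (y - x)) :=
            setIntegral_mono_on hInt.integrableOn (hintexp.const_mul _)
              measurableSet_Ioi hfub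
        _ = f x * (-c)⁻¹ := by rw [integral_const_mul, exp_integral_Ioi x c hc]
    have hGlower : f x * ((Real.exp d - 1)/d) ≤ G x := by
      have h1 : ∫ y in Ioc x (x+1), f x * Real.exp (d * (y - x))
          ≤ ∫ y in Ioc x (x+1), f y :=
        setIntegral_mono_on
          ((by fun_prop : Continuous fun y : ℝ => f x * Real.exp (d * (y - x))).integrableOn_Ioc)
          hInt.integrableOn measurableSet_Ioc hflb
      have h2 : ∫ y in Ioc x (x+1), f y ≤ G x :=
        setIntegral_mono_set hInt.integrableOn
          (Filter.Eventually.of_forall fun y => hf_nonneg y)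
          (HasSubset.Subset.eventuallyLE Ioc_subset_Ioi_self)
      have h3 : ∫ y in Ioc x (x+1), f x * Real.exp (d * (y - x))
          = f x * ((Real.exp d - 1)/d) := by
        rw [integral_const_mul, exp_integral_Ioc x d hdne]
      linarith
    -- M bounds
    have hMupper : M x ≤ f x * (c^2)⁻¹ := by
      calc M x ≤ ∫ y in Ioi x, f x * ((y - x) * Real.exp (c * (y - x))) := by
            refine setIntegral_mono_on hMint (hintmulexp.const_mul _) measurableSet_Ioi ?_
            intro y hy
            have hy' : (0:ℝ) ≤ y - x := by simp at hy; linarith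
            calc (y - x) * f y ≤ (y - x) * (f x * Real.exp (c * (y - x))) :=
                  mul_le_mul_of_nonneg_left (hfub y hy) hy'
              _ = f x * ((y - x) * Real.exp (c * (y - x))) := by ring
        _ = f x * (c^2)⁻¹ := by rw [integral_const_mul, mul_exp_integral_Ioi x c hc]
    have hMlower : f x * ((Real.exp d * (d - 1) + 1)/d^2) ≤ M x := by
      have hMIocInt : IntegrableOn (fun y => (y - x) * f y) (Ioc x (x+1)) := by
        refine Integrable.mono' hInt.integrableOn ?_ ?_
        · exact ((measurable_id.sub_const x).mul hf_meas).aestronglyMeasurable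
        · refine (ae_restrict_iff' measurableSet_Ioc).2
            (Filter.Eventually.of_forall fun y hy => ?_)
          have h1 : (0:ℝ) ≤ y - x := by linarith [hy.1]
          have h2 : y - x ≤ 1 := by linarith [hy.2]
          rw [Real.norm_eq_abs, abs_of_nonneg (mul_nonneg h1 (hf_nonneg y))]
          nlinarith [hf_nonneg y]
      have h1 : ∫ y in Ioc x (x+1), f x * ((y - x) * Real.exp (d * (y - x)))
          ≤ ∫ y in Ioc x (x+1), (y - x) * f y := by
        refine setIntegral_mono_on
          ((by fun_prop :
            Continuous fun y : ℝ => f x * ((y - x) * Real.exp (d * (y - x)))).integrableOn_Ioc)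
          hMIocInt measurableSet_Ioc ?_
        intro y hy
        have hy' : (0:ℝ) ≤ y - x := by linarith [hy.1]
        calc f x * ((y - x) * Real.exp (d * (y - x)))
            = (y - x) * (f x * Real.exp (d * (y - x))) := by ring
          _ ≤ (y - x) * f y := mul_le_mul_of_nonneg_left (hflb y hy) hy'
      have h2 : ∫ y in Ioc x (x+1), (y - x) * f y ≤ M x := by
        refine setIntegral_mono_set hMint ?_
          (HasSubset.Subset.eventuallyLE Ioc_subset_Ioi_self)
        refine (ae_restrict_iff' measurableSet_Ioi).2
          (Filter.Eventually.of_forall fun y hy => ?_)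
        have : (0:ℝ) ≤ y - x := by simp at hy; linarith
        exact mul_nonneg this (hf_nonneg y)
      have h3 : ∫ y in Ioc x (x+1), f x * ((y - x) * Real.exp (d * (y - x)))
          = f x * ((Real.exp d * (d - 1) + 1)/d^2) := by
        rw [integral_const_mul, mul_exp_integral_Ioc x d hdne]
      linarith
    have hA : 0 < (Real.exp d - 1)/d := div_pos_of_neg_of_neg (by linarith) hd
    have hGpos : 0 < G x := lt_of_lt_of_le (mul_pos hfx hA) hGlower
    have hexpdd : Real.exp d * Real.exp (-d) = 1 := by rw [← Real.exp_add]; simp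
    have hB : 0 ≤ Real.exp d * (d - 1) + 1 := by
      nlinarith [mul_le_mul_of_nonneg_left (Real.add_one_le_exp (-d)) (Real.exp_pos d).le]
    have hM0 : 0 ≤ M x :=
      le_trans (mul_nonneg hfx.le (div_nonneg hB (sq_nonneg d))) hMlower
    -- 1 - F x = G x
    have hFG : 1 - F x = G x := by
      have h1 := intervalIntegral.integral_Iic_add_Ioi (b := x) (μ := volume) hInt.integrableOn hInt.integrableOn
      rw [hf_int] at h1
      rw [hF]
      simp only [hGdef]
      linarith
    -- μ x = M x / G x
    have hmax : (∫ y, max (y - x) 0 * f y) = M x := by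
      have h1 : (∫ y in Ioi x, max (y - x) 0 * f y) = ∫ y, max (y - x) 0 * f y := by
        refine setIntegral_eq_integral_of_forall_compl_eq_zero fun y hy => ?_
        have : y ≤ x := not_lt.1 hy
        rw [max_eq_right (by linarith), zero_mul]
      have h2 : (∫ y in Ioi x, max (y - x) 0 * f y) = M x := by
        refine setIntegral_congr_fun measurableSet_Ioi fun y hy => ?_
        have : (0:ℝ) ≤ y - x := by simp at hy; linarith
        rw [max_eq_left this]
      rw [← h1, h2]
    have hμx : μ x = M x / G x := by
      rw [hμ x, if_pos (hF_lt_one x), hFG, hmax, inv_mul_eq_div]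
    have h1me : (0:ℝ) < 1 - Real.exp d := by linarith
    constructor
    · rw [hμx, div_mul_eq_mul_div, le_div_iff₀ hGpos]
      have h0 : 0 ≤ c^2 * (Real.exp d * (d - 1) + 1) / d^2 :=
        div_nonneg (mul_nonneg (sq_nonneg c) hB) (sq_nonneg d)
      have e1 : c^2 * (Real.exp d * (d - 1) + 1) / d^2 * (f x * (-c)⁻¹)
          = (f x * ((Real.exp d * (d - 1) + 1)/d^2)) * (-c) := by
        field_simp
      calc c^2 * (Real.exp d * (d - 1) + 1) / d^2 * G x
          ≤ c^2 * (Real.exp d * (d - 1) + 1) / d^2 * (f x * (-c)⁻¹) :=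
            mul_le_mul_of_nonneg_left hGupper h0
        _ = (f x * ((Real.exp d * (d - 1) + 1)/d^2)) * (-c) := e1
        _ ≤ M x * (-c) := mul_le_mul_of_nonneg_right hMlower (by linarith)
    · rw [hμx, div_mul_eq_mul_div, div_le_iff₀ hGpos]
      have hU0 : 0 ≤ d / c * (1 - Real.exp d)⁻¹ :=
        mul_nonneg (le_of_lt (div_pos_of_neg_of_neg hd hc)) (inv_nonneg.2 h1me.le)
      have e1 : f x * (c^2)⁻¹ * (-c) = d / c * (1 - Real.exp d)⁻¹
          * (f x * ((Real.exp d - 1)/d)) := by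
        field_simp
        ring
      calc M x * (-c) ≤ f x * (c^2)⁻¹ * (-c) :=
            mul_le_mul_of_nonneg_right hMupper (by linarith)
        _ = d / c * (1 - Real.exp d)⁻¹ * (f x * ((Real.exp d - 1)/d)) := e1
        _ ≤ d / c * (1 - Real.exp d)⁻¹ * G x :=
            mul_le_mul_of_nonneg_left hGlower hU0
  refine tendsto_of_tendsto_of_tendsto_of_le_of_le' hL hU ?_ ?_
  · filter_upwards [hgt] with x hx
    exact (hbounds x hx).1
  · filter_upwards [hgt] with x hx
    exact (hbounds x hx).2
end

section
/- If X₁,…,X_n are i.i.d. exponential with mean μ₀ > 0 and \bar X_n denotes their sample mean, then for every ε ≥ 0, P(±(\bar X_n/μ₀ − 1) ≥ ε) ≤ exp(−n·H(±ε)), where H(t) := t − log(1+t) for t > −1 and H(t) := ∞ for t ≤ −1. -/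
open MeasureTheory Set ProbabilityTheory

/-- `H(t) = t - log(1+t)` for `t > -1`, extended by `H(t) = ∞` for `t ≤ -1`. -/
noncomputable def Hext (t : ℝ) : EReal :=
  if t ≤ -1 then ⊤ else ((t - Real.log (1 + t) : ℝ) : EReal)

/-- The Chernov bound `exp(-n h)`, equal to `0` when `h = ∞`. -/
noncomputable def chernovBound (n : ℕ) (h : EReal) : ENNReal :=
  if h = ⊤ then 0 else ENNReal.ofReal (Real.exp (-(n : ℝ) * h.toReal))

section Aux
open Real

lemma map_eq_expMeasure {Ω : Type*} [MeasurableSpace Ω] (P : Measure Ω) [IsProbabilityMeasure P]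
    (X : Ω → ℝ) (hX : Measurable X) (μ0 : ℝ) (hμ0 : 0 < μ0)
    (hdist : ∀ t : ℝ, 0 ≤ t → P {ω | t < X ω} = ENNReal.ofReal (Real.exp (-t / μ0))) :
    P.map X = expMeasure (1/μ0) := by
  have hr : (0:ℝ) < 1/μ0 := by positivity
  have h1 : IsProbabilityMeasure (expMeasure (1/μ0)) := isProbabilityMeasure_expMeasure hr
  have h2 : IsProbabilityMeasure (P.map X) := Measure.isProbabilityMeasure_map hX.aemeasurable
  refine Measure.ext_of_Iic _ _ (fun x => ?_)
  rw [Measure.map_apply hX measurableSet_Iic]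
  have hIic : X ⁻¹' Iic x = {ω | x < X ω}ᶜ := by ext ω; simp [not_lt]
  have hms : ∀ y : ℝ, MeasurableSet {ω | y < X ω} := fun y => hX measurableSet_Ioi
  have hright : expMeasure (1/μ0) (Iic x)
      = ENNReal.ofReal (if 0 ≤ x then 1 - Real.exp (-(1/μ0 * x)) else 0) := by
    rw [← ofReal_cdf,
      cdf_expMeasure_eq hr]
  rw [hright, hIic]
  rcases le_or_gt 0 x with hx | hx
  · rw [measure_compl (hms x) (measure_ne_top _ _), hdist x hx, measure_univ]
    rw [if_pos hx]
    rw [ENNReal.ofReal_sub _ (exp_nonneg _), ENNReal.ofReal_one]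
    congr 2
    ring
  · have h0 : P {ω | 0 < X ω} = 1 := by
      rw [hdist 0 le_rfl]; simp
    have hsub : {ω | x < X ω}ᶜ ⊆ {ω | 0 < X ω}ᶜ := by
      intro ω hω
      simp only [mem_compl_iff, mem_setOf_eq, not_lt] at *
      exact hω.trans hx.le
    have : P {ω | 0 < X ω}ᶜ = 0 := by
      rw [measure_compl (hms 0) (measure_ne_top _ _), h0, measure_univ, tsub_self]
    rw [if_neg (not_le.2 hx), ENNReal.ofReal_zero]
    exact le_antisymm (le_trans (measure_mono hsub) this.le) zero_le

lemma integral_exp_tail {b : ℝ} (hb : 0 < b) :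
    ∫ x in Ioi (0:ℝ), Real.exp (-(b * x)) = b⁻¹ := by
  have := MeasureTheory.integral_comp_mul_left_Ioi (fun x => Real.exp (-x)) 0 hb
  simp only [mul_zero, integral_exp_neg_Ioi, neg_zero, exp_zero, smul_eq_mul, mul_one] at this
  simpa using this

lemma integrable_exp_tail {b : ℝ} (hb : 0 < b) :
    IntegrableOn (fun x => Real.exp (-(b * x))) (Ioi (0:ℝ)) := by
  simpa [neg_mul] using exp_neg_integrableOn_Ioi 0 hb

lemma mgf_expMeasure {r t : ℝ} (hr : 0 < r) (ht : t < r) :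
    Integrable (fun x => Real.exp (t * x)) (expMeasure r) ∧
    ∫ x, Real.exp (t * x) ∂(expMeasure r) = r * (r - t)⁻¹ := by
  have hrt : 0 < r - t := by linarith
  have hdens : expMeasure r = volume.withDensity (exponentialPDF r) := rfl
  set g : ℝ → ℝ := Set.indicator (Ici (0:ℝ)) (fun x => r * Real.exp (-((r - t) * x))) with hg
  have hgeq : ∀ x, exponentialPDFReal r x * Real.exp (t * x) = g x := by
    intro x
    rw [hg]
    rcases le_or_gt 0 x with hx | hx
    · rw [Set.indicator_of_mem (mem_Ici.2 hx)]
      have : exponentialPDFReal r x = r * Real.exp (-(r * x)) := by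
        rw [exponentialPDFReal, gammaPDFReal, if_pos hx]
        simp [Real.Gamma_one]
      rw [this, mul_assoc, ← Real.exp_add]
      ring_nf
    · rw [Set.indicator_of_notMem (by simpa using hx)]
      rw [exponentialPDFReal, gammaPDFReal, if_neg (not_le.2 hx), zero_mul]
  have hg_intOn : IntegrableOn (fun x => r * Real.exp (-((r - t) * x))) (Ici (0:ℝ)) := by
    rw [integrableOn_Ici_iff_integrableOn_Ioi]
    exact (integrable_exp_tail hrt).const_mul r
  have hg_int : Integrable g volume := by
    rw [hg, integrable_indicator_iff measurableSet_Ici]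
    exact hg_intOn
  have hg_nonneg : ∀ x, 0 ≤ g x := by
    intro x
    rw [← hgeq x]
    exact mul_nonneg (exponentialPDFReal_nonneg hr x) (exp_nonneg _)
  have hg_integral : ∫ x, g x = r * (r - t)⁻¹ := by
    rw [hg, integral_indicator measurableSet_Ici, integral_Ici_eq_integral_Ioi,
      integral_const_mul, integral_exp_tail hrt]
  -- lintegral computation
  have hmeas_exp : Measurable (fun x : ℝ => ENNReal.ofReal (Real.exp (t * x))) :=
    (ENNReal.measurable_ofReal.comp ((measurable_id.const_mul t).exp))
  have hL : ∫⁻ x, ENNReal.ofReal (Real.exp (t * x)) ∂(expMeasure r)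
      = ENNReal.ofReal (r * (r - t)⁻¹) := by
    have hpdf_meas : Measurable (exponentialPDF r) := by
      have : exponentialPDF r = fun x => ENNReal.ofReal (exponentialPDFReal r x) := rfl
      rw [this]
      exact (measurable_exponentialPDFReal r).ennreal_ofReal
    rw [hdens, lintegral_withDensity_eq_lintegral_mul _ hpdf_meas hmeas_exp]
    calc ∫⁻ x, (exponentialPDF r x * ENNReal.ofReal (Real.exp (t * x)))
        = ∫⁻ x, ENNReal.ofReal (g x) := by
          refine lintegral_congr fun x => ?_
          rw [← hgeq x, exponentialPDF, ← ENNReal.ofReal_mul (exponentialPDFReal_nonneg hr x)]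
      _ = ENNReal.ofReal (∫ x, g x) :=
          (ofReal_integral_eq_lintegral_ofReal hg_int (ae_of_all _ hg_nonneg)).symm
      _ = ENNReal.ofReal (r * (r - t)⁻¹) := by rw [hg_integral]
  have hsm : AEStronglyMeasurable (fun x => Real.exp (t * x)) (expMeasure r) :=
    ((measurable_id.const_mul t).exp).aestronglyMeasurable
  have hint : Integrable (fun x => Real.exp (t * x)) (expMeasure r) := by
    refine ⟨hsm, ?_⟩
    rw [hasFiniteIntegral_iff_ofReal (ae_of_all _ fun x => exp_nonneg _), hL]
    exact ENNReal.ofReal_lt_top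
  refine ⟨hint, ?_⟩
  rw [integral_eq_lintegral_of_nonneg_ae (ae_of_all _ fun x => exp_nonneg _) hsm, hL,
    ENNReal.toReal_ofReal (by positivity)]

lemma exp_mgf_main {Ω : Type*} [MeasurableSpace Ω] (P : Measure Ω) [IsProbabilityMeasure P]
    (X : Ω → ℝ) (hX : Measurable X) (μ0 : ℝ) (hμ0 : 0 < μ0)
    (hdist : ∀ t : ℝ, 0 ≤ t → P {ω | t < X ω} = ENNReal.ofReal (Real.exp (-t / μ0)))
    {t : ℝ} (ht : t < 1/μ0) :
    Integrable (fun ω => Real.exp (t * X ω)) P ∧ mgf X P t = (1 - μ0 * t)⁻¹ := by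
  have hmap := map_eq_expMeasure P X hX μ0 hμ0 hdist
  have hr : (0:ℝ) < 1/μ0 := by positivity
  obtain ⟨hint, hval⟩ := mgf_expMeasure hr ht
  rw [← hmap] at hint hval
  have hsm : AEStronglyMeasurable (fun x => Real.exp (t * x)) (P.map X) :=
    ((measurable_id.const_mul t).exp).aestronglyMeasurable
  have h1mt : (0:ℝ) < 1 - μ0 * t := by
    have := (mul_lt_mul_of_pos_left ht hμ0)
    rw [mul_one_div, div_self hμ0.ne'] at this
    linarith
  constructor
  · exact (integrable_map_measure hsm hX.aemeasurable).1 hint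
  · rw [mgf, ← integral_map hX.aemeasurable hsm, hval]
    field_simp

end Aux

open Real in
/-- Chernov bounds for the sample mean of i.i.d. exponential random variables
with mean `μ₀`: `P(±(X̄ₙ/μ₀ - 1) ≥ ε) ≤ exp(-n H(±ε))`. -/
theorem stmt_9
    {Ω : Type*} [MeasurableSpace Ω] (P : Measure Ω) [IsProbabilityMeasure P]
    (n : ℕ) (hn : 0 < n) (X : Fin n → Ω → ℝ) (hX : ∀ i, Measurable (X i))
    (hindep : iIndepFun X P)
    (μ0 : ℝ) (hμ0 : 0 < μ0)
    (hdist : ∀ i, ∀ t : ℝ, 0 ≤ t →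
      P {ω | t < X i ω} = ENNReal.ofReal (Real.exp (-t / μ0)))
    (ε : ℝ) (hε : 0 ≤ ε) :
    P {ω | ε ≤ (n : ℝ)⁻¹ * (∑ i, X i ω) / μ0 - 1} ≤ chernovBound n (Hext ε) ∧
    P {ω | ε ≤ -((n : ℝ)⁻¹ * (∑ i, X i ω) / μ0 - 1)} ≤ chernovBound n (Hext (-ε)) := by
  have hn' : (0:ℝ) < n := Nat.cast_pos.2 hn
  set S : Ω → ℝ := ∑ i, X i with hSdef
  have hSapp : ∀ ω, S ω = ∑ i, X i ω := fun ω => by simp [hSdef]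
  constructor
  · -- upper tail
    set t₀ : ℝ := ε / (μ0 * (1 + ε)) with ht₀
    have h1ε : (0:ℝ) < 1 + ε := by linarith
    have ht₀0 : 0 ≤ t₀ := by positivity
    have ht₀lt : t₀ < 1/μ0 := by
      rw [ht₀, div_lt_div_iff₀ (by positivity) hμ0]
      nlinarith
    have hmgf : ∀ i : Fin n, mgf (X i) P t₀ = (1 - μ0 * t₀)⁻¹ :=
      fun i => (exp_mgf_main P (X i) (hX i) μ0 hμ0 (hdist i) ht₀lt).2
    have hint : ∀ i : Fin n, Integrable (fun ω => Real.exp (t₀ * X i ω)) P :=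
      fun i => (exp_mgf_main P (X i) (hX i) μ0 hμ0 (hdist i) ht₀lt).1
    have hintS : Integrable (fun ω => Real.exp (t₀ * S ω)) P :=
      hindep.integrable_exp_mul_sum hX (fun i _ => hint i)
    have hmgfS : mgf S P t₀ = (1 + ε)^n := by
      rw [hSdef, hindep.mgf_sum hX]
      have : (1 : ℝ) - μ0 * t₀ = (1 + ε)⁻¹ := by
        rw [ht₀]; field_simp
        ring
      simp only [hmgf, this, inv_inv, Finset.prod_const, Finset.card_univ, Fintype.card_fin]
    set a : ℝ := (ε + 1) * μ0 * n with ha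
    have hev : {ω | ε ≤ (n : ℝ)⁻¹ * (∑ i, X i ω) / μ0 - 1} = {ω | a ≤ S ω} := by
      ext ω
      simp only [mem_setOf_eq, hSapp]
      rw [le_sub_iff_add_le, le_div_iff₀ hμ0, inv_mul_eq_div, le_div_iff₀ hn', ha]
    have hbound := measure_ge_le_exp_mul_mgf (X := S) (μ := P) a ht₀0 hintS
    rw [hmgfS] at hbound
    have hval : Real.exp (-t₀ * a) * (1 + ε)^n = Real.exp (-(n:ℝ) * (ε - Real.log (1 + ε))) := by
      have h1 : -t₀ * a = -((n:ℝ) * ε) := by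
        rw [ht₀, ha]; field_simp; ring
      have h2 : (1 + ε)^n = Real.exp ((n:ℝ) * Real.log (1 + ε)) := by
        rw [Real.exp_nat_mul, Real.exp_log h1ε]
      rw [h1, h2, ← Real.exp_add]
      ring_nf
    have hH : Hext ε = ((ε - Real.log (1 + ε) : ℝ) : EReal) := by
      rw [Hext, if_neg (by linarith)]
    have hcb : chernovBound n (Hext ε) =
        ENNReal.ofReal (Real.exp (-(n:ℝ) * (ε - Real.log (1 + ε)))) := by
      rw [hH, chernovBound, if_neg (EReal.coe_ne_top _), EReal.toReal_coe]
    rw [hev, hcb, ← ENNReal.ofReal_toReal (measure_ne_top P _)]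
    exact ENNReal.ofReal_le_ofReal (by rw [← hval]; exact hbound)
  · -- lower tail
    set b : ℝ := (1 - ε) * μ0 * n with hb
    have hev : {ω | ε ≤ -((n : ℝ)⁻¹ * (∑ i, X i ω) / μ0 - 1)} = {ω | S ω ≤ b} := by
      ext ω
      simp only [mem_setOf_eq, hSapp, neg_sub]
      rw [le_sub_comm, div_le_iff₀ hμ0, inv_mul_eq_div, div_le_iff₀ hn', hb]
    rw [hev]
    rcases le_or_gt 1 ε with hε1 | hε1
    · -- ε ≥ 1 : bound is 0
      have hH : Hext (-ε) = ⊤ := by rw [Hext, if_pos (by linarith)]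
      rw [hH, chernovBound, if_pos rfl]
      have hnull : ∀ i : Fin n, P {ω | X i ω ≤ 0} = 0 := by
        intro i
        have h0 : P {ω | 0 < X i ω} = 1 := by rw [hdist i 0 le_rfl]; simp
        have : {ω | X i ω ≤ 0} = {ω | 0 < X i ω}ᶜ := by ext ω; simp [not_lt]
        have hms : MeasurableSet {ω | 0 < X i ω} := measurableSet_lt measurable_const (hX i)
        rw [this, measure_compl hms (measure_ne_top _ _), h0, measure_univ, tsub_self]
      have hsub : {ω | S ω ≤ b} ⊆ ⋃ i : Fin n, {ω | X i ω ≤ 0} := by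
        intro ω hω
        by_contra hc
        simp only [mem_iUnion, mem_setOf_eq, not_exists, not_le] at hc
        have hpos : 0 < S ω := by
          rw [hSapp]
          exact Finset.sum_pos (fun i _ => hc i) ⟨⟨0, hn⟩, Finset.mem_univ _⟩
        have hb0 : b ≤ 0 := by
          rw [hb]
          have h1 : (1:ℝ) - ε ≤ 0 := by linarith
          have h2 : (0:ℝ) < μ0 * n := mul_pos hμ0 hn'
          nlinarith
        exact absurd hω (by simp only [mem_setOf_eq]; linarith)
      exact le_antisymm ((measure_mono hsub).trans
        (by rw [measure_iUnion_null fun i => hnull i])) zero_le |>.le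
    · -- ε < 1
      have h1ε : (0:ℝ) < 1 - ε := by linarith
      set t₁ : ℝ := -(ε / (μ0 * (1 - ε))) with ht₁
      have ht₁0 : t₁ ≤ 0 := by rw [ht₁, neg_nonpos]; positivity
      have ht₁lt : t₁ < 1/μ0 := lt_of_le_of_lt ht₁0 (by positivity)
      have hmgf : ∀ i : Fin n, mgf (X i) P t₁ = (1 - μ0 * t₁)⁻¹ :=
        fun i => (exp_mgf_main P (X i) (hX i) μ0 hμ0 (hdist i) ht₁lt).2
      have hint : ∀ i : Fin n, Integrable (fun ω => Real.exp (t₁ * X i ω)) P :=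
        fun i => (exp_mgf_main P (X i) (hX i) μ0 hμ0 (hdist i) ht₁lt).1
      have hintS : Integrable (fun ω => Real.exp (t₁ * S ω)) P :=
        hindep.integrable_exp_mul_sum hX (fun i _ => hint i)
      have hmgfS : mgf S P t₁ = (1 - ε)^n := by
        rw [hSdef, hindep.mgf_sum hX]
        have : (1 : ℝ) - μ0 * t₁ = (1 - ε)⁻¹ := by
          rw [ht₁]; field_simp
          ring
        simp only [hmgf, this, inv_inv, Finset.prod_const, Finset.card_univ, Fintype.card_fin]
      have hbound := measure_le_le_exp_mul_mgf (X := S) (μ := P) b ht₁0 hintS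
      rw [hmgfS] at hbound
      have hval : Real.exp (-t₁ * b) * (1 - ε)^n
          = Real.exp (-(n:ℝ) * (-ε - Real.log (1 + -ε))) := by
        have h1 : -t₁ * b = (n:ℝ) * ε := by
          rw [ht₁, hb]; field_simp
        have h2 : (1 - ε)^n = Real.exp ((n:ℝ) * Real.log (1 - ε)) := by
          rw [Real.exp_nat_mul, Real.exp_log h1ε]
        have h3 : (1 : ℝ) + -ε = 1 - ε := by ring
        rw [h1, h2, ← Real.exp_add, h3]
        ring_nf
      have hH : Hext (-ε) = ((-ε - Real.log (1 + -ε) : ℝ) : EReal) := by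
        rw [Hext, if_neg (by linarith)]
      have hcb : chernovBound n (Hext (-ε)) =
          ENNReal.ofReal (Real.exp (-(n:ℝ) * (-ε - Real.log (1 + -ε)))) := by
        rw [hH, chernovBound, if_neg (EReal.coe_ne_top _), EReal.toReal_coe]
      rw [hcb, ← ENNReal.ofReal_toReal (measure_ne_top P _)]
      exact ENNReal.ofReal_le_ofReal (by rw [← hval]; exact hbound)
end

section
/- Let P be a probability measure on [0,∞) with log-concave density and mean μ₀, and let \tilde P be the exponential distribution with mean μ₀. Then for every convex function Ψ : ℝ → ℝ, ∫ Ψ dP ≤ ∫ Ψ d\tilde P (i.e. P is smaller than \tilde P in convex order). In particular ∫ e^{tx} P(dx) ≤ ∫ e^{tx} \tilde P(dx) for all t ∈ ℝ. -/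
open MeasureTheory Set Filter

lemma myexp_tendsto {b : ℝ} (hb : 0 < b) :
    Tendsto (fun x : ℝ => Real.exp (-b * x)) atTop (nhds 0) :=
  Real.tendsto_exp_atBot.comp (tendsto_id.const_mul_atTop_of_neg (neg_neg_iff_pos.2 hb))

lemma myexp_int1 {b : ℝ} (hb : 0 < b) :
    ∫ x in Ioi (0:ℝ), Real.exp (-b * x) = b⁻¹ := by
  have hd : ∀ x ∈ Ici (0:ℝ), HasDerivAt (fun y => -Real.exp (-b * y) / b)
      (Real.exp (-b * x)) x := by
    intro x _
    have h1 : HasDerivAt (fun y : ℝ => -b * y) (-b) x := by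
      simpa using (hasDerivAt_id x).const_mul (-b)
    have := (h1.exp.neg).div_const b
    refine this.congr_deriv ?_
    rw [mul_neg, neg_neg, mul_div_assoc, div_self hb.ne', mul_one]
  have ht : Tendsto (fun x : ℝ => -Real.exp (-b * x) / b) atTop (nhds 0) := by
    have := ((myexp_tendsto hb).neg).div_const b
    simpa using this
  have := integral_Ioi_of_hasDerivAt_of_tendsto' hd (exp_neg_integrableOn_Ioi 0 hb) ht
  rw [this]
  simp [neg_div]

lemma myexp_tendsto2 {b : ℝ} (hb : 0 < b) :
    Tendsto (fun x : ℝ => x * Real.exp (-b * x)) atTop (nhds 0) := by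
  have t1 := (Real.tendsto_pow_mul_exp_neg_atTop_nhds_zero 1).comp
    (tendsto_id.const_mul_atTop hb)
  have t2 := t1.const_mul b⁻¹
  rw [mul_zero] at t2
  refine t2.congr fun x => ?_
  simp only [Function.comp, pow_one, id_eq]
  field_simp

lemma myexp_F_deriv {b : ℝ} (hb : 0 < b) :
    ∀ x ∈ Ici (0:ℝ), HasDerivAt (fun y => -(y / b + 1 / b ^ 2) * Real.exp (-b * y))
      (x * Real.exp (-b * x)) x := by
  intro x _
  have h1 : HasDerivAt (fun y : ℝ => -(y / b + 1 / b ^ 2)) (-(1/b)) x := by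
    have := (((hasDerivAt_id x).div_const b).add_const (1 / b ^ 2)).neg
    exact this
  have h2 : HasDerivAt (fun y : ℝ => Real.exp (-b * y)) (Real.exp (-b * x) * (-b)) x := by
    have h0 : HasDerivAt (fun y : ℝ => -b * y) (-b) x := by
      simpa using (hasDerivAt_id x).const_mul (-b)
    exact h0.exp
  have := h1.mul h2
  refine this.congr_deriv ?_
  have hb0 : b ≠ 0 := hb.ne'
  field_simp
  ring

lemma myexp_F_tendsto {b : ℝ} (hb : 0 < b) :
    Tendsto (fun y : ℝ => -(y / b + 1 / b ^ 2) * Real.exp (-b * y)) atTop (nhds 0) := by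
  have t1 := ((myexp_tendsto2 hb).const_mul (-(1/b))).add
    ((myexp_tendsto hb).const_mul (-(1/b^2)))
  rw [mul_zero, mul_zero, add_zero] at t1
  refine t1.congr fun x => ?_
  ring

lemma myexp_int2On {b : ℝ} (hb : 0 < b) :
    IntegrableOn (fun x : ℝ => x * Real.exp (-b * x)) (Ioi 0) :=
  integrableOn_Ioi_deriv_of_nonneg' (myexp_F_deriv hb)
    (fun x hx => mul_nonneg (le_of_lt hx) (Real.exp_pos _).le) (myexp_F_tendsto hb)

lemma myexp_int2 {b : ℝ} (hb : 0 < b) :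
    ∫ x in Ioi (0:ℝ), x * Real.exp (-b * x) = b⁻¹ * b⁻¹ := by
  have := integral_Ioi_of_hasDerivAt_of_nonneg' (myexp_F_deriv hb)
    (fun x hx => mul_nonneg (le_of_lt hx) (Real.exp_pos _).le) (myexp_F_tendsto hb)
  rw [this, mul_zero, Real.exp_zero]
  field_simp
  ring

lemma myg_comb {b u v t : ℝ} (hb : 0 < b) :
    (b * Real.exp (-b * u)) ^ t * (b * Real.exp (-b * v)) ^ (1 - t)
      = b * Real.exp (-b * (t * u + (1 - t) * v)) := by
  rw [Real.mul_rpow hb.le (Real.exp_pos _).le, Real.mul_rpow hb.le (Real.exp_pos _).le,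
    ← Real.exp_mul, ← Real.exp_mul]
  have hbt : b ^ t * b ^ (1 - t) = b := by
    rw [← Real.rpow_add hb]
    norm_num
  calc b ^ t * Real.exp (-b * u * t) * (b ^ (1 - t) * Real.exp (-b * v * (1 - t)))
      = (b ^ t * b ^ (1 - t)) * (Real.exp (-b * u * t) * Real.exp (-b * v * (1 - t))) := by ring
    _ = b * Real.exp (-b * (t * u + (1 - t) * v)) := by
        rw [hbt, ← Real.exp_add]
        congr 1
        ring

lemma chord_in {Ψ : ℝ → ℝ} (hΨ : ConvexOn ℝ univ Ψ) {a c : ℝ} (hac : a < c)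
    (x : ℝ) (h1 : a ≤ x) (h2 : x ≤ c) :
    Ψ x ≤ ((c - x) * Ψ a + (x - a) * Ψ c) / (c - a) := by
  have hca : (0:ℝ) < c - a := by linarith
  rw [le_div_iff₀ hca]
  rcases eq_or_lt_of_le h1 with rfl | h1'
  · apply le_of_eq; ring
  rcases eq_or_lt_of_le h2 with rfl | h2'
  · apply le_of_eq; ring
  have key := hΨ.secant_mono_aux1 (mem_univ a) (mem_univ c) h1' h2'
  linarith

lemma chord_out_left {Ψ : ℝ → ℝ} (hΨ : ConvexOn ℝ univ Ψ) {a c : ℝ} (hac : a < c)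
    (x : ℝ) (h : x < a) :
    ((c - x) * Ψ a + (x - a) * Ψ c) / (c - a) ≤ Ψ x := by
  have hca : (0:ℝ) < c - a := by linarith
  rw [div_le_iff₀ hca]
  have key := hΨ.secant_mono_aux1 (mem_univ x) (mem_univ c) h hac
  linarith

lemma chord_out_right {Ψ : ℝ → ℝ} (hΨ : ConvexOn ℝ univ Ψ) {a c : ℝ} (hac : a < c)
    (x : ℝ) (h : c < x) :
    ((c - x) * Ψ a + (x - a) * Ψ c) / (c - a) ≤ Ψ x := by
  have hca : (0:ℝ) < c - a := by linarith
  rw [div_le_iff₀ hca]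
  have key := hΨ.secant_mono_aux1 (mem_univ a) (mem_univ x) hac h
  linarith

lemma aux_main {f : ℝ → ℝ} (hf_nonneg : ∀ x, 0 ≤ f x)
    (hf_logconcave : ∀ x y t : ℝ, 0 ≤ t → t ≤ 1 →
      f x ^ t * f y ^ (1 - t) ≤ f (t * x + (1 - t) * y))
    (hf_supp : ∀ x : ℝ, x < 0 → f x = 0)
    (hf_int : ∫ x, f x = 1)
    {b : ℝ} (hb : 0 < b) (hmean : ∫ x, x * f x = b⁻¹)
    (Ψ : ℝ → ℝ) (hΨ : ConvexOn ℝ univ Ψ)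
    (hint1 : Integrable (fun x => Ψ x * f x))
    (hint2 : IntegrableOn (fun x => Ψ x * (b * Real.exp (-b * x))) (Ioi 0)) :
    ∫ x, Ψ x * f x ≤ ∫ x in Ioi (0:ℝ), Ψ x * (b * Real.exp (-b * x)) := by
  set g : ℝ → ℝ := fun x => b * Real.exp (-b * x) with hg_def
  set G : ℝ → ℝ := (Ioi (0:ℝ)).indicator g with hG_def
  have hfint : Integrable f := by
    by_contra h
    rw [integral_undef h] at hf_int; exact zero_ne_one hf_int
  have hxfint : Integrable (fun x => x * f x) := by
    by_contra h
    rw [integral_undef h] at hmean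
    exact (inv_pos.2 hb).ne' hmean.symm
  have hgi : IntegrableOn g (Ioi 0) := (exp_neg_integrableOn_Ioi 0 hb).const_mul b
  have hxgi : IntegrableOn (fun x => x * g x) (Ioi 0) := by
    have := (myexp_int2On hb).const_mul b
    simpa [hg_def, mul_comm, mul_assoc, mul_left_comm, IntegrableOn] using this
  have hGint : Integrable G := (integrable_indicator_iff measurableSet_Ioi).2 hgi
  have hxG_eq : (fun x => x * G x) = (Ioi (0:ℝ)).indicator (fun x => x * g x) := by
    funext x; by_cases h : x ∈ Ioi (0:ℝ) <;> simp [hG_def, h]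
  have hxGint : Integrable (fun x => x * G x) := by
    rw [hxG_eq]; exact (integrable_indicator_iff measurableSet_Ioi).2 hxgi
  have hΨG_eq : (fun x => Ψ x * G x) = (Ioi (0:ℝ)).indicator (fun x => Ψ x * g x) := by
    funext x; by_cases h : x ∈ Ioi (0:ℝ) <;> simp [hG_def, h]
  have hΨGint : Integrable (fun x => Ψ x * G x) := by
    rw [hΨG_eq]; exact (integrable_indicator_iff measurableSet_Ioi).2 hint2
  have hG1 : ∫ x, G x = 1 := by
    rw [hG_def, integral_indicator measurableSet_Ioi, hg_def]
    rw [MeasureTheory.integral_const_mul, myexp_int1 hb]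
    field_simp
  have hG2 : ∫ x, x * G x = b⁻¹ := by
    rw [hxG_eq, integral_indicator measurableSet_Ioi]
    have heq : ∀ x : ℝ, x * g x = b * (x * Real.exp (-b * x)) := fun x => by
      rw [hg_def]; ring
    simp_rw [heq]
    rw [MeasureTheory.integral_const_mul, myexp_int2 hb]
    field_simp
  have hΨG : ∫ x, Ψ x * G x = ∫ x in Ioi (0:ℝ), Ψ x * g x := by
    rw [hΨG_eq, integral_indicator measurableSet_Ioi]
  set Δ : ℝ → ℝ := fun x => G x - f x with hΔ_def
  have hΔint : Integrable Δ := hGint.sub hfint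
  have hxΔint : Integrable (fun x => x * Δ x) := by
    have h : (fun x => x * Δ x) = fun x => x * G x - x * f x := by
      funext x; simp only [hΔ_def]; ring
    rw [h]; exact hxGint.sub hxfint
  have hΨΔint : Integrable (fun x => Ψ x * Δ x) := by
    have h : (fun x => Ψ x * Δ x) = fun x => Ψ x * G x - Ψ x * f x := by
      funext x; simp only [hΔ_def]; ring
    rw [h]; exact hΨGint.sub hint1
  have m0 : ∫ x, Δ x = 0 := by
    simp only [hΔ_def]
    rw [integral_sub hGint hfint, hG1, hf_int, sub_self]
  have m1 : ∫ x, x * Δ x = 0 := by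
    have h : (fun x => x * Δ x) = fun x => x * G x - x * f x := by
      funext x; simp only [hΔ_def]; ring
    rw [h, integral_sub hxGint hxfint, hG2, hmean, sub_self]
  have mgoal : ∫ x, Ψ x * Δ x = (∫ x in Ioi (0:ℝ), Ψ x * g x) - ∫ x, Ψ x * f x := by
    have h : (fun x => Ψ x * Δ x) = fun x => Ψ x * G x - Ψ x * f x := by
      funext x; simp only [hΔ_def]; ring
    rw [h, integral_sub hΨGint hint1, hΨG]
  suffices hfinal : 0 ≤ ∫ x, Ψ x * Δ x by
    rw [mgoal] at hfinal; linarith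
  have hae_ne : ∀ y : ℝ, ∀ᵐ x : ℝ, x ≠ y := fun y => by
    simp [ae_iff]
  have hdeg : (Δ =ᵐ[volume] 0) → 0 ≤ ∫ x, Ψ x * Δ x := by
    intro h
    have h2 : (fun x => Ψ x * Δ x) =ᵐ[volume] 0 := by
      filter_upwards [h] with x hx
      simp only [Pi.zero_apply] at hx ⊢
      rw [hx, mul_zero]
    rw [integral_eq_zero_of_ae h2]
  have hdeg' : (∀ᵐ x : ℝ, 0 ≤ Δ x) → 0 ≤ ∫ x, Ψ x * Δ x := by
    intro h
    exact hdeg ((integral_eq_zero_iff_of_nonneg_ae h hΔint).1 m0)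
  have hgpos : ∀ x, 0 < g x := fun x => mul_pos hb (Real.exp_pos _)
  set T : Set ℝ := {x | 0 < x ∧ g x ≤ f x} with hT_def
  have hTconv : ∀ u v t : ℝ, u ∈ T → v ∈ T → 0 ≤ t → t ≤ 1 → t * u + (1 - t) * v ∈ T := by
    intro u v t hu hv ht0 ht1
    have hu1 : 0 < u := hu.1
    have hv1 : 0 < v := hv.1
    constructor
    · rcases eq_or_lt_of_le ht1 with rfl | h
      · simpa using hu1
      · have h1 : 0 < (1 - t) * v := mul_pos (by linarith) hv1
        have h2 : 0 ≤ t * u := mul_nonneg ht0 hu1.le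
        linarith
    · have h1 : g u ^ t ≤ f u ^ t := Real.rpow_le_rpow (hgpos u).le hu.2 ht0
      have h2 : g v ^ (1 - t) ≤ f v ^ (1 - t) :=
        Real.rpow_le_rpow (hgpos v).le hv.2 (by linarith)
      have h3 : g u ^ t * g v ^ (1 - t) ≤ f u ^ t * f v ^ (1 - t) :=
        mul_le_mul h1 h2 (Real.rpow_nonneg (hgpos v).le _) (Real.rpow_nonneg (hf_nonneg u) _)
      have h4 := hf_logconcave u v t ht0 ht1
      have h5 : g u ^ t * g v ^ (1 - t) = g (t * u + (1 - t) * v) := by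
        simp only [hg_def]; exact myg_comb hb
      calc g (t * u + (1 - t) * v) = g u ^ t * g v ^ (1 - t) := h5.symm
        _ ≤ f u ^ t * f v ^ (1 - t) := h3
        _ ≤ f (t * u + (1 - t) * v) := h4
  have hΔ_neg : ∀ x : ℝ, x < 0 → Δ x = 0 := by
    intro x hx
    have h1 : x ∉ Ioi (0:ℝ) := by simp [mem_Ioi]; linarith
    simp [hΔ_def, hG_def, indicator_of_notMem h1, hf_supp x hx]
  have hΔ_posOut : ∀ x : ℝ, 0 < x → x ∉ T → 0 ≤ Δ x := by
    intro x hx hxT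
    have h1 : f x ≤ g x := by
      by_contra hc
      exact hxT ⟨hx, (not_le.1 hc).le⟩
    have hGx : G x = g x := indicator_of_mem (mem_Ioi.2 hx) g
    simp only [hΔ_def, hGx]
    linarith
  have hΔ_inT : ∀ x : ℝ, x ∈ T → Δ x ≤ 0 := by
    intro x hxT
    have hGx : G x = g x := indicator_of_mem (mem_Ioi.2 hxT.1) g
    simp only [hΔ_def, hGx]
    linarith [hxT.2]
  by_cases hTne : T.Nonempty
  case neg =>
    apply hdeg'
    filter_upwards [hae_ne 0] with x hx0
    rcases lt_trichotomy x 0 with h | h | h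
    · exact le_of_eq (hΔ_neg x h).symm
    · exact absurd h hx0
    · exact hΔ_posOut x h fun hxT => hTne ⟨x, hxT⟩
  case pos =>
  have hT_bdd : BddBelow T := ⟨0, fun x hx => hx.1.le⟩
  set a := sInf T with ha_def
  have ha0 : 0 ≤ a := le_csInf hTne fun x hx => hx.1.le
  have h_below : ∀ x, x < a → x ∉ T := fun x hx hxT =>
    absurd (csInf_le hT_bdd hxT) (not_le.2 hx)
  have h_mid_gen : ∀ x, a < x → (∃ v ∈ T, x < v) → x ∈ T := by
    rintro x hax ⟨v, hvT, hxv⟩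
    obtain ⟨u, huT, hux⟩ := (csInf_lt_iff hT_bdd hTne).1 hax
    have huv : u < v := hux.trans hxv
    have ht0 : 0 ≤ (v - x) / (v - u) := div_nonneg (by linarith) (by linarith)
    have ht1 : (v - x) / (v - u) ≤ 1 := (div_le_one (by linarith)).2 (by linarith)
    have hmem := hTconv u v _ huT hvT ht0 ht1
    have hne : v - u ≠ 0 := by linarith
    have hx_eq : (v - x) / (v - u) * u + (1 - (v - x) / (v - u)) * v = x := by
      field_simp
      ring
    rwa [hx_eq] at hmem
  by_cases hTbdd : BddAbove T
  case neg =>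
    have h_above : ∀ x, a < x → x ∈ T := by
      intro x hax
      rcases not_bddAbove_iff.1 hTbdd x with ⟨v, hvT, hxv⟩
      exact h_mid_gen x hax ⟨v, hvT, hxv⟩
    have hWint : Integrable (fun x => (x - a) * Δ x) := by
      have h : (fun x => (x - a) * Δ x) = fun x => x * Δ x - a * Δ x := by
        funext x; ring
      rw [h]; exact hxΔint.sub (hΔint.const_mul a)
    have hW0 : ∫ x, (x - a) * Δ x = 0 := by
      have h : (fun x => (x - a) * Δ x) = fun x => x * Δ x - a * Δ x := by
        funext x; ring
      rw [h, integral_sub hxΔint (hΔint.const_mul a), m1,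
        MeasureTheory.integral_const_mul, m0, mul_zero, sub_self]
    have hWle : ∀ᵐ x : ℝ, 0 ≤ -((x - a) * Δ x) := by
      filter_upwards [hae_ne 0] with x hx0
      rw [neg_nonneg]
      rcases lt_trichotomy x a with h | h | h
      · rcases lt_trichotomy x 0 with h' | h' | h'
        · rw [hΔ_neg x h', mul_zero]
        · exact absurd h' hx0
        · have hΔx : 0 ≤ Δ x := hΔ_posOut x h' (h_below x h)
          exact mul_nonpos_iff.2 (Or.inr ⟨by linarith, hΔx⟩)
      · rw [h, sub_self, zero_mul]
      · exact mul_nonpos_iff.2 (Or.inl ⟨by linarith, hΔ_inT x (h_above x h)⟩)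
    have hWzero : (fun x => -((x - a) * Δ x)) =ᵐ[volume] 0 := by
      refine (integral_eq_zero_iff_of_nonneg_ae hWle hWint.neg).1 ?_
      rw [integral_neg, hW0, neg_zero]
    apply hdeg
    filter_upwards [hWzero, hae_ne a] with x hWx hxa
    simp only [Pi.zero_apply, neg_eq_zero] at hWx
    rcases mul_eq_zero.1 hWx with h | h
    · exact absurd (by linarith [sub_eq_zero.1 h] : x = a) hxa
    · simpa using h
  case pos =>
  set c := sSup T with hc_def
  have hac : a ≤ c := csInf_le_csSup hTne hT_bdd hTbdd
  have h_above : ∀ x, c < x → x ∉ T := fun x hx hxT =>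
    absurd (le_csSup hTbdd hxT) (not_le.2 hx)
  have h_mid : ∀ x, a < x → x < c → x ∈ T := by
    intro x h1 h2
    obtain ⟨v, hvT, hxv⟩ := (lt_csSup_iff hTbdd hTne).1 h2
    exact h_mid_gen x h1 ⟨v, hvT, hxv⟩
  rcases eq_or_lt_of_le hac with heq | hac'
  · apply hdeg'
    filter_upwards [hae_ne 0, hae_ne a] with x hx0 hxa
    rcases lt_trichotomy x 0 with h | h | h
    · exact le_of_eq (hΔ_neg x h).symm
    · exact absurd h hx0
    · rcases lt_or_gt_of_ne hxa with h' | h'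
      · exact hΔ_posOut x h (h_below x h')
      · exact hΔ_posOut x h (h_above x (by rw [← heq]; exact h'))
  · set α := (c * Ψ a - a * Ψ c) / (c - a) with hα
    set β := (Ψ c - Ψ a) / (c - a) with hβ
    have hca : (0:ℝ) < c - a := by linarith
    have hL : ∀ x : ℝ, α + β * x = ((c - x) * Ψ a + (x - a) * Ψ c) / (c - a) := by
      intro x
      rw [hα, hβ]
      field_simp
      ring
    have hLa : α + β * a = Ψ a := by
      rw [hL]
      field_simp
      ring
    have hLc : α + β * c = Ψ c := by
      rw [hL]
      field_simp
      ring
    have hpoint : ∀ᵐ x : ℝ, 0 ≤ (Ψ x - (α + β * x)) * Δ x := by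
      filter_upwards [hae_ne 0] with x hx0
      rcases lt_trichotomy x a with h | h | h
      · have hΨL : α + β * x ≤ Ψ x := by
          rw [hL]; exact chord_out_left hΨ hac' x h
        have hΔx : 0 ≤ Δ x := by
          rcases lt_trichotomy x 0 with h' | h' | h'
          · exact le_of_eq (hΔ_neg x h').symm
          · exact absurd h' hx0
          · exact hΔ_posOut x h' (h_below x h)
        exact mul_nonneg (by linarith) hΔx
      · rw [h, hLa, sub_self, zero_mul]
      · rcases lt_trichotomy x c with h2 | h2 | h2
        · have hxT := h_mid x h h2
          have hΨL : Ψ x ≤ α + β * x := by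
            rw [hL]; exact chord_in hΨ hac' x (by linarith) (by linarith)
          have h9 : (Ψ x - (α + β * x)) * Δ x = (α + β * x - Ψ x) * (-Δ x) := by ring
          rw [h9]
          exact mul_nonneg (by linarith) (by linarith [hΔ_inT x hxT])
        · rw [h2, hLc, sub_self, zero_mul]
        · have hΨL : α + β * x ≤ Ψ x := by
            rw [hL]; exact chord_out_right hΨ hac' x h2
          have hΔx : 0 ≤ Δ x := hΔ_posOut x (by linarith) (h_above x h2)
          exact mul_nonneg (by linarith) hΔx
    have hsplit : (fun x => (Ψ x - (α + β * x)) * Δ x)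
        = fun x => Ψ x * Δ x - (α * Δ x + β * (x * Δ x)) := by
      funext x; ring
    have h1 : 0 ≤ ∫ x, (Ψ x - (α + β * x)) * Δ x := integral_nonneg_of_ae hpoint
    have hia : Integrable (fun x => α * Δ x) := hΔint.const_mul α
    have hib : Integrable (fun x => β * (x * Δ x)) := hxΔint.const_mul β
    have hiab : Integrable (fun x => α * Δ x + β * (x * Δ x)) := hia.add hib
    have hI2 : ∫ x, (α * Δ x + β * (x * Δ x)) = 0 := by
      rw [integral_add hia hib,
        MeasureTheory.integral_const_mul, MeasureTheory.integral_const_mul, m0, m1]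
      ring
    have h2 : ∫ x, (Ψ x - (α + β * x)) * Δ x = ∫ x, Ψ x * Δ x := by
      rw [hsplit, integral_sub hΨΔint hiab, hI2, sub_zero]
    rw [← h2]
    exact h1
/-- A probability measure with a log-concave density supported in `[0,∞)` and
mean `μ₀` is smaller in convex order than the exponential distribution with
mean `μ₀`; in particular its moment generating function is dominated by the
exponential one. -/
theorem stmt_13
    (f : ℝ → ℝ) (hf_meas : Measurable f) (hf_nonneg : ∀ x, 0 ≤ f x)
    (hf_logconcave : ∀ x y t : ℝ, 0 ≤ t → t ≤ 1 →
      f x ^ t * f y ^ (1 - t) ≤ f (t * x + (1 - t) * y))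
    (hf_supp : ∀ x : ℝ, x < 0 → f x = 0)
    (hf_int : ∫ x, f x = 1)
    (μ0 : ℝ) (hμ0 : μ0 = ∫ x, x * f x) (hμ0_pos : 0 < μ0) :
    (∀ Ψ : ℝ → ℝ, ConvexOn ℝ univ Ψ →
      Integrable (fun x => Ψ x * f x) →
      IntegrableOn (fun x => Ψ x * (μ0⁻¹ * Real.exp (-x / μ0))) (Ioi 0) →
      ∫ x, Ψ x * f x ≤ ∫ x in Ioi (0:ℝ), Ψ x * (μ0⁻¹ * Real.exp (-x / μ0))) ∧
    (∀ t : ℝ, Integrable (fun x => Real.exp (t * x) * f x) →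
      IntegrableOn (fun x => Real.exp (t * x) * (μ0⁻¹ * Real.exp (-x / μ0))) (Ioi 0) →
      ∫ x, Real.exp (t * x) * f x ≤
        ∫ x in Ioi (0:ℝ), Real.exp (t * x) * (μ0⁻¹ * Real.exp (-x / μ0))) := by
  have hb : 0 < μ0⁻¹ := inv_pos.2 hμ0_pos
  have hgeq : ∀ x : ℝ, μ0⁻¹ * Real.exp (-x / μ0) = μ0⁻¹ * Real.exp (-μ0⁻¹ * x) := by
    intro x
    congr 1
    ring
  have hmean : ∫ x, x * f x = (μ0⁻¹)⁻¹ := by rw [inv_inv]; exact hμ0.symm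
  have main : ∀ Ψ : ℝ → ℝ, ConvexOn ℝ univ Ψ →
      Integrable (fun x => Ψ x * f x) →
      IntegrableOn (fun x => Ψ x * (μ0⁻¹ * Real.exp (-x / μ0))) (Ioi 0) →
      ∫ x, Ψ x * f x ≤ ∫ x in Ioi (0:ℝ), Ψ x * (μ0⁻¹ * Real.exp (-x / μ0)) := by
    intro Ψ hΨ h1 h2
    have heq : (fun x => Ψ x * (μ0⁻¹ * Real.exp (-x / μ0)))
        = fun x => Ψ x * (μ0⁻¹ * Real.exp (-μ0⁻¹ * x)) := by
      funext x; rw [hgeq]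
    rw [heq] at h2
    have := aux_main hf_nonneg hf_logconcave hf_supp hf_int hb hmean Ψ hΨ h1 h2
    simp only [hgeq]
    exact this
  refine ⟨main, fun t h1 h2 => main _ ?_ h1 h2⟩
  refine ⟨convex_univ, fun x _ y _ a b ha hb' hab => ?_⟩
  simp only [smul_eq_mul]
  calc Real.exp (t * (a * x + b * y)) = Real.exp (a * (t * x) + b * (t * y)) := by
        congr 1; ring
    _ ≤ a * Real.exp (t * x) + b * Real.exp (t * y) := by
        have := convexOn_exp.2 (mem_univ (t * x)) (mem_univ (t * y)) ha hb' hab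
        simpa using this
end
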